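/- arXiv:1010.2464 — 11 statements merged into one kernel-verified Lean document; each statement's English description precedes it below -/
import Mathlib

section
/- If H is an induced subgraph of a graph G, then Γ_d(G) ≥ Γ_d(H). -/
/-- An orientation of a simple graph `G`: each edge gets exactly one direction. -/
def IsOrientation {V : Type*} (G : SimpleGraph V) (o : V → V → Prop) : Prop :=
  (∀ u v, o u v → G.Adj u v) ∧
  (∀ u v, G.Adj u v → (o u v ∨ o v u)) ∧
  (∀ u v, o u v → ¬ o v u)

/-- A directed dominating set: every vertex outside `S` has an in-neighbor in `S`. -/
def IsDirDomSet {V : Type*} (o : V → V → Prop) (S : Set V) : Prop :=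
  ∀ v, v ∉ S → ∃ u ∈ S, o u v

/-- The directed domination number of a digraph (orientation). -/
noncomputable def dirDomNum (V : Type*) [Fintype V] (o : V → V → Prop) : ℕ :=
  sInf {n | ∃ S : Finset V, S.card = n ∧ IsDirDomSet o ↑S}

/-- The (upper) directed domination number of a graph: the maximum of `dirDomNum`
over all orientations. -/
noncomputable def GammaD {V : Type*} [Fintype V] (G : SimpleGraph V) : ℕ :=
  sSup {n | ∃ o, IsOrientation G o ∧ dirDomNum V o = n}

/-- The independence number of a graph. -/
noncomputable def indepNum {V : Type*} [Fintype V] (G : SimpleGraph V) : ℕ :=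
  sSup {n | ∃ S : Finset V, S.card = n ∧ ∀ u ∈ S, ∀ w ∈ S, u ≠ w → ¬ G.Adj u w}

lemma dirDomNum_le_card (V : Type*) [Fintype V] (o : V → V → Prop) :
    dirDomNum V o ≤ Fintype.card V := by
  apply Nat.sInf_le
  exact ⟨Finset.univ, rfl, fun v hv => absurd (Finset.mem_coe.mp (Finset.mem_univ v)) hv⟩

lemma GammaD_bddAbove {V : Type*} [Fintype V] (G : SimpleGraph V) :
    BddAbove {n | ∃ o, IsOrientation G o ∧ dirDomNum V o = n} := by
  refine ⟨Fintype.card V, fun n hn => ?_⟩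
  obtain ⟨o, _, rfl⟩ := hn
  exact dirDomNum_le_card V o

theorem stmt1 {V : Type*} [Fintype V] (G : SimpleGraph V) (s : Finset V) :
    GammaD (G.induce (↑s : Set V)) ≤ GammaD G := by
  classical
  apply csSup_le'
  rintro n ⟨o, ⟨ho1, ho2, ho3⟩, rfl⟩
  -- extend o to an orientation D of G
  let r : V → V → Prop := WellOrderingRel
  haveI : IsWellOrder V r := WellOrderingRel.isWellOrder
  let D : V → V → Prop := fun u v => G.Adj u v ∧
    (if hu : u ∈ s then (if hv : v ∈ s then o ⟨u, hu⟩ ⟨v, hv⟩ else True)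
     else (if v ∈ s then False else r u v))
  have hD : IsOrientation G D := by
    refine ⟨fun u v h => h.1, fun u v h => ?_, fun u v h => ?_⟩
    · by_cases hu : u ∈ s <;> by_cases hv : v ∈ s
      · rcases ho2 ⟨u, hu⟩ ⟨v, hv⟩ (by simpa using h) with h' | h'
        · exact Or.inl ⟨h, by simp [hu, hv, h']⟩
        · exact Or.inr ⟨h.symm, by simp [hu, hv, h']⟩
      · exact Or.inl ⟨h, by simp [hu, hv]⟩
      · exact Or.inr ⟨h.symm, by simp [hu, hv]⟩
      · rcases trichotomous_of r u v with h' | h' | h'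
        · exact Or.inl ⟨h, by simp [hu, hv, h']⟩
        · exact absurd h' h.ne
        · exact Or.inr ⟨h.symm, by simp [hu, hv, h']⟩
    · rintro ⟨hadj, h2⟩
      obtain ⟨_, h1⟩ := h
      by_cases hu : u ∈ s <;> by_cases hv : v ∈ s <;> simp [hu, hv] at h1 h2
      · exact ho3 _ _ h1 h2
      · exact absurd (_root_.trans h1 h2) (irrefl_of r u)
  -- it suffices: dirDomNum on the subtype ≤ dirDomNum V D
  have key : dirDomNum (↑s : Set V) o ≤ dirDomNum V D := by
    apply le_csInf
    · exact ⟨Fintype.card V, Finset.univ, rfl,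
        fun v hv => absurd (Finset.mem_coe.mp (Finset.mem_univ v)) hv⟩
    rintro m ⟨S, rfl, hS⟩
    haveI : Fintype (↑(↑s : Set V)) := FinsetCoe.fintype s
    set T : Finset (↑s : Set V) := Finset.univ.filter (fun x => (x : V) ∈ S) with hT
    have hcard : T.card ≤ S.card := by
      apply Finset.card_le_card_of_injOn (fun x : (↑s : Set V) => (x : V))
      · intro x hx; exact (Finset.mem_filter.mp hx).2
      · intro a _ b _ h; exact Subtype.ext h
    refine le_trans (Nat.sInf_le ⟨T, rfl, ?_⟩) hcard
    · rintro ⟨v, hv⟩ hvT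
      have hvs : v ∈ s := Finset.mem_coe.mp hv
      have hvS : v ∉ S := by
        intro hvS
        exact hvT (by simp [hT, hvS])
      obtain ⟨u, huS, hadj, hcond⟩ := hS v hvS
      have hus : u ∈ s := by
        by_contra hus
        simp [hus, hvs] at hcond
      refine ⟨⟨u, Finset.mem_coe.mpr hus⟩, ?_, ?_⟩
      · simp only [hT, Finset.coe_filter, Finset.mem_univ, true_and, Set.mem_setOf_eq]
        exact Finset.mem_coe.mp huS
      · simpa [hus, hvs] using hcond
  calc dirDomNum (↑s : Set V) o ≤ dirDomNum V D := key
    _ ≤ GammaD G := le_csSup (GammaD_bddAbove G) ⟨D, hD, rfl⟩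
end

section
/- For every graph G, Γ_d(G) ≥ ⌈(diam(G)+1)/2⌉, where diam(G) is the diameter of G (assumed finite, i.e., G connected). -/
open SimpleGraph

private lemma dist_getVert_le' {V : Type*} (G : SimpleGraph V) (hconn : G.Connected)
    {x y : V} (p : G.Walk x y) : ∀ j, G.dist x (p.getVert j) ≤ j := by
  induction p with
  | nil => intro j; simp [SimpleGraph.Walk.getVert, SimpleGraph.dist_self]
  | @cons a b c h q ih =>
    intro j
    cases j with
    | zero => simp [SimpleGraph.Walk.getVert, SimpleGraph.dist_self]
    | succ j =>
      have h1 : G.dist a b ≤ 1 := by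
        simpa using SimpleGraph.dist_le h.toWalk
      calc G.dist a ((SimpleGraph.Walk.cons h q).getVert (j+1))
          = G.dist a (q.getVert j) := rfl
        _ ≤ G.dist a b + G.dist b (q.getVert j) := hconn.dist_triangle
        _ ≤ 1 + j := Nat.add_le_add h1 (ih j)
        _ = j + 1 := by omega

private lemma dist_getVert_to_end' {V : Type*} (G : SimpleGraph V)
    {x y : V} (p : G.Walk x y) : ∀ j, G.dist (p.getVert j) y ≤ p.length - j := by
  induction p with
  | nil => intro j; simp [SimpleGraph.Walk.getVert, SimpleGraph.dist_self]
  | @cons a b c h q ih =>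
    intro j
    cases j with
    | zero =>
      simpa [SimpleGraph.Walk.getVert] using SimpleGraph.dist_le (SimpleGraph.Walk.cons h q)
    | succ j =>
      simpa [SimpleGraph.Walk.getVert] using ih j

private lemma exists_layer {V : Type*} (G : SimpleGraph V) (hconn : G.Connected)
    (x y : V) {j : ℕ} (hj : j ≤ G.dist x y) : ∃ w, G.dist x w = j := by
  obtain ⟨p, hp⟩ := hconn.exists_walk_length_eq_dist x y
  refine ⟨p.getVert j, le_antisymm (dist_getVert_le' G hconn p j) ?_⟩
  have h1 := dist_getVert_to_end' G p j
  have h2 : G.dist x y ≤ G.dist x (p.getVert j) + G.dist (p.getVert j) y :=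
    hconn.dist_triangle
  omega

theorem stmt5' {V : Type*} [Fintype V] (G : SimpleGraph V) (hconn : G.Connected) :
    (G.diam + 2) / 2 ≤ sSup {n | ∃ o, IsOrientation G o ∧ dirDomNum V o = n} := by
  have hne : Nonempty V := hconn.nonempty
  obtain ⟨x, y, hxy⟩ := SimpleGraph.exists_dist_eq_diam (G := G)
  set d := G.diam with hd
  set dX : V → ℕ := fun v => G.dist x v with hdX
  set o : V → V → Prop := fun u v =>
    G.Adj u v ∧ (dX v < dX u ∨ (dX v = dX u ∧ WellOrderingRel v u)) with ho
  have horient : IsOrientation G o := by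
    refine ⟨fun u v h => h.1, ?_, ?_⟩
    · intro u v hadj
      rcases lt_trichotomy (dX u) (dX v) with h | h | h
      · exact Or.inr ⟨hadj.symm, Or.inl h⟩
      · rcases trichotomous_of WellOrderingRel u v with hr | hr | hr
        · exact Or.inr ⟨hadj.symm, Or.inr ⟨h, hr⟩⟩
        · exact absurd hr hadj.ne
        · exact Or.inl ⟨hadj, Or.inr ⟨h.symm, hr⟩⟩
      · exact Or.inl ⟨hadj, Or.inl h⟩
    · rintro u v ⟨-, h1⟩ ⟨-, h2⟩
      rcases h1 with h1 | ⟨h1, hr1⟩ <;> rcases h2 with h2 | ⟨h2, hr2⟩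
      · omega
      · omega
      · omega
      · exact asymm hr1 hr2
  -- key step property: if o u v then dX v ≤ dX u ≤ dX v + 1
  have hstep : ∀ u v, o u v → dX v ≤ dX u ∧ dX u ≤ dX v + 1 := by
    rintro u v ⟨hadj, h⟩
    have h1 : G.dist x u ≤ G.dist x v + G.dist v u := hconn.dist_triangle
    have h2 : G.dist v u ≤ 1 := by simpa using SimpleGraph.dist_le hadj.symm.toWalk
    constructor
    · rcases h with h | ⟨h, -⟩ <;> omega
    · simp only [hdX]; omega
  -- every dominating set has card ≥ d/2 + 1
  have hdom : ∀ S : Finset V, IsDirDomSet o ↑S → d / 2 + 1 ≤ S.card := by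
    intro S hS
    have key : ∀ k ∈ Finset.range (d / 2 + 1), ∃ s ∈ S, dX s / 2 = k := by
      intro k hk
      simp only [Finset.mem_range] at hk
      have h2k : 2 * k ≤ G.dist x y := by omega
      obtain ⟨w, hw⟩ := exists_layer G hconn x y h2k
      by_cases hwS : w ∈ S
      · exact ⟨w, hwS, by simp [hdX, hw, Nat.mul_div_cancel_left]⟩
      · obtain ⟨u, huS, huv⟩ := hS w hwS
        obtain ⟨ha, hb⟩ := hstep u w huv
        refine ⟨u, huS, ?_⟩
        have : dX w = 2 * k := hw
        omega
    have hsurj : Set.SurjOn (fun s => dX s / 2) ↑S ↑(Finset.range (d / 2 + 1)) := by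
      intro k hk
      obtain ⟨s, hs, hsk⟩ := key k (by simpa using hk)
      exact ⟨s, hs, hsk⟩
    have := Finset.card_le_card_of_surjOn (fun s => dX s / 2) hsurj
    simpa using this
  -- dirDomNum o ≥ d/2 + 1
  have hnum : d / 2 + 1 ≤ dirDomNum V o := by
    apply le_csInf
    · exact ⟨Fintype.card V, Finset.univ, by simp, fun v hv => absurd (Finset.mem_univ v) hv⟩
    · rintro n ⟨S, rfl, hSdom⟩
      exact hdom S hSdom
  have hbdd : BddAbove {n | ∃ o, IsOrientation G o ∧ dirDomNum V o = n} := by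
    refine ⟨Fintype.card V, ?_⟩
    rintro n ⟨o', -, rfl⟩
    exact Nat.sInf_le ⟨Finset.univ, by simp, fun v hv => absurd (Finset.mem_univ v) hv⟩
  have hmem : dirDomNum V o ∈ {n | ∃ o, IsOrientation G o ∧ dirDomNum V o = n} :=
    ⟨o, horient, rfl⟩
  calc (d + 2) / 2 = d / 2 + 1 := by omega
    _ ≤ dirDomNum V o := hnum
    _ ≤ _ := le_csSup hbdd hmem

theorem stmt5 {V : Type*} [Fintype V] (G : SimpleGraph V) (hconn : G.Connected) :
    (G.diam + 2) / 2 ≤ GammaD G := by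
  exact stmt5' G hconn
end

section
/- For every graph G of order n, Γ_d(G) ≤ n − α'(G), where α'(G) is the matching number of G. -/
/-- The matching number of a graph. -/
noncomputable def matchNum {V : Type*} [Fintype V] (G : SimpleGraph V) : ℕ :=
  sSup {n | ∃ M : G.Subgraph, M.IsMatching ∧ M.edgeSet.ncard = n}

/-!
Fix an orientation and a matching `M`. Orienting each edge of `M` marks one endpoint as its head;
since every vertex lies in at most one edge of `M`, the tail of a matching edge is never a head,
so the non-heads dominate every head. Hence the complement of the `|M|` heads is a directed
dominating set, and `γ(D) ≤ n - |M|` for every orientation `D`.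
-/

section Matching

variable {V : Type*} {G : SimpleGraph V} {M : G.Subgraph} {o : V → V → Prop}

def orientedHeads (M : G.Subgraph) (o : V → V → Prop) : Set V :=
  {v | ∃ u, M.Adj u v ∧ o u v}

lemma isDirDomSet_compl_orientedHeads (hM : M.IsMatching) (hasymm : ∀ u v, o u v → ¬ o v u) :
    IsDirDomSet o (orientedHeads M o)ᶜ := by
  rintro v hv
  obtain ⟨u, huv, hou⟩ := not_not.mp hv
  refine ⟨u, ?_, hou⟩
  rintro ⟨w, hwu, how⟩
  obtain rfl : w = v := hM.eq_of_adj_left hwu.symm huv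
  exact hasymm u w hou how

lemma ncard_edgeSet_le_ncard_orientedHeads [Finite V] (hM : M.IsMatching)
    (htotal : ∀ u v, M.Adj u v → o u v ∨ o v u) :
    M.edgeSet.ncard ≤ (orientedHeads M o).ncard := by
  let toEdge : orientedHeads M o → M.edgeSet := fun v =>
    hM.toEdge ⟨v, v.2.choose_spec.1.snd_mem⟩
  have hsurj : Function.Surjective toEdge := by
    rintro ⟨e, he⟩
    induction e with
    | h a b =>
      have hab : M.Adj a b := he
      rcases htotal a b hab with hoab | hoba
      · exact ⟨⟨b, a, hab, hoab⟩,
          (hM.toEdge_eq_of_adj hab.symm).trans (Subtype.ext Sym2.eq_swap)⟩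
      · exact ⟨⟨a, b, hab.symm, hoba⟩, hM.toEdge_eq_of_adj hab⟩
  exact Nat.card_le_card_of_surjective toEdge hsurj

end Matching

lemma dirDomNum_le_ncard {V : Type*} [Fintype V] {o : V → V → Prop} {S : Set V}
    (hS : IsDirDomSet o S) : dirDomNum V o ≤ S.ncard := by
  classical
  refine Nat.sInf_le ⟨S.toFinset, ?_, ?_⟩
  · rw [Set.ncard_eq_toFinset_card']
  · rwa [Set.coe_toFinset]

lemma dirDomNum_le_card_sub_ncard_edgeSet {V : Type*} [Fintype V] {G : SimpleGraph V}
    {o : V → V → Prop} (ho : IsOrientation G o) {M : G.Subgraph} (hM : M.IsMatching) :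
    dirDomNum V o ≤ Fintype.card V - M.edgeSet.ncard := by
  obtain ⟨-, htotal, hasymm⟩ := ho
  have hdom := dirDomNum_le_ncard (isDirDomSet_compl_orientedHeads hM hasymm)
  have hheads := ncard_edgeSet_le_ncard_orientedHeads (o := o) hM
    fun u v huv => htotal u v (M.adj_sub huv)
  have hcompl := Set.ncard_add_ncard_compl (orientedHeads M o)
  rw [Nat.card_eq_fintype_card] at hcompl
  omega

lemma exists_isMatching_ncard_edgeSet_eq_matchNum {V : Type*} [Fintype V] (G : SimpleGraph V) :
    ∃ M : G.Subgraph, M.IsMatching ∧ M.edgeSet.ncard = matchNum G := by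
  refine Nat.sSup_mem (s := {n | ∃ M : G.Subgraph, M.IsMatching ∧ M.edgeSet.ncard = n})
    ⟨0, ⊥, fun v hv => hv.elim, by simp⟩ ⟨Nat.card (Sym2 V), ?_⟩
  rintro n ⟨M, -, rfl⟩
  exact Set.ncard_le_card M.edgeSet

lemma GammaD_le {V : Type*} [Fintype V] {G : SimpleGraph V} {k : ℕ}
    (h : ∀ o, IsOrientation G o → dirDomNum V o ≤ k) : GammaD G ≤ k :=
  csSup_le' (by rintro n ⟨o, ho, rfl⟩; exact h o ho)

theorem stmt7 {V : Type*} [Fintype V] (G : SimpleGraph V) :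
    GammaD G ≤ Fintype.card V - matchNum G := by
  obtain ⟨M, hM, hcard⟩ := exists_isMatching_ncard_edgeSet_eq_matchNum G
  exact GammaD_le fun o ho => hcard ▸ dirDomNum_le_card_sub_ncard_edgeSet ho hM
end

section
/- If a graph G of order n has a perfect matching, then Γ_d(G) ≤ n/2. -/
theorem key_bound {V : Type*} [Fintype V] (G : SimpleGraph V)
    (h : ∃ M : G.Subgraph, M.IsPerfectMatching)
    (o : V → V → Prop) (ho : IsOrientation G o) :
    2 * dirDomNum V o ≤ Fintype.card V := by
  classical
  obtain ⟨M, hmatch, hspan⟩ := h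
  have hex : ∀ v : V, ∃! w, M.Adj v w := fun v => hmatch (hspan v)
  set f : V → V := fun v => (hex v).exists.choose with hfdef
  have hadj : ∀ v, M.Adj v (f v) := fun v => (hex v).exists.choose_spec
  have hff : ∀ v, f (f v) = v := fun v =>
    (hex (f v)).unique (hadj (f v)) ((hadj v).symm)
  have hinj : Function.Injective f := by
    intro a b hab
    have := congrArg f hab
    rwa [hff, hff] at this
  set S : Finset V := Finset.univ.filter (fun v => o v (f v)) with hS
  have hdom : IsDirDomSet o ↑S := by
    intro v hv
    have hvS : ¬ o v (f v) := by
      intro hc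
      exact hv (by simp [hS, hc])
    have hGadj : G.Adj v (f v) := M.adj_sub (hadj v)
    have hor : o v (f v) ∨ o (f v) v := ho.2.1 v (f v) hGadj
    have hofv : o (f v) v := hor.resolve_left hvS
    refine ⟨f v, ?_, hofv⟩
    simp only [hS, Finset.coe_filter, Set.mem_setOf_eq, Finset.mem_univ, true_and]
    rw [hff]
    exact hofv
  have hdisj : Disjoint S (S.image f) := by
    rw [Finset.disjoint_left]
    intro v hvS hvT
    obtain ⟨w, hwS, hwv⟩ := Finset.mem_image.mp hvT
    have hvw : w = f v := by rw [← hwv, hff]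
    have h1 : o v (f v) := (Finset.mem_filter.mp hvS).2
    have h2 : o w (f w) := (Finset.mem_filter.mp hwS).2
    rw [hwv] at h2
    rw [← hvw] at h1
    exact ho.2.2 v w h1 h2
  have hcard : 2 * S.card ≤ Fintype.card V := by
    have h1 : (S ∪ S.image f).card = S.card + (S.image f).card :=
      Finset.card_union_of_disjoint hdisj
    have h2 : (S.image f).card = S.card := Finset.card_image_of_injective _ hinj
    have h3 : (S ∪ S.image f).card ≤ Fintype.card V := by
      rw [← Finset.card_univ]
      exact Finset.card_le_card (Finset.subset_univ _)
    omega
  have hle : dirDomNum V o ≤ S.card := Nat.sInf_le ⟨S, rfl, hdom⟩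
  omega

theorem stmt8 {V : Type*} [Fintype V] (G : SimpleGraph V)
    (h : ∃ M : G.Subgraph, M.IsPerfectMatching) :
    2 * GammaD G ≤ Fintype.card V := by
  classical
  unfold GammaD
  set s : Set ℕ := {n | ∃ o, IsOrientation G o ∧ dirDomNum V o = n} with hs
  by_cases hne : s.Nonempty
  · have hbdd : BddAbove s := by
      refine ⟨Fintype.card V, fun n hn => ?_⟩
      obtain ⟨o, ho, rfl⟩ := hn
      have := key_bound G h o ho
      omega
    have hmem : sSup s ∈ s := Nat.sSup_mem hne hbdd
    obtain ⟨o, ho, heq⟩ := hmem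
    rw [← heq]
    exact key_bound G h o ho
  · rw [Set.not_nonempty_iff_eq_empty] at hne
    rw [hne, csSup_empty]
    simp
end

section
/- If G is a bipartite graph, then Γ_d(G) = α(G), the independence number of G. -/
section Aux

variable {V : Type*} [Fintype V] (G : SimpleGraph V)

/-- The set of sizes of independent sets is bounded above. -/
lemma aux_indep_bdd : BddAbove {n | ∃ S : Finset V, S.card = n ∧
    ∀ u ∈ S, ∀ w ∈ S, u ≠ w → ¬ G.Adj u w} := by
  refine ⟨Fintype.card V, ?_⟩
  rintro n ⟨S, rfl, -⟩
  exact S.card_le_univ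

lemma aux_indep_le_indepNum (S : Finset V)
    (h : ∀ u ∈ S, ∀ w ∈ S, u ≠ w → ¬ G.Adj u w) : S.card ≤ indepNum G :=
  le_csSup (aux_indep_bdd G) ⟨S, rfl, h⟩

lemma aux_exists_max_indep : ∃ S : Finset V, S.card = indepNum G ∧
    ∀ u ∈ S, ∀ w ∈ S, u ≠ w → ¬ G.Adj u w := by
  have h := Nat.sSup_mem (s := {n | ∃ S : Finset V, S.card = n ∧
      ∀ u ∈ S, ∀ w ∈ S, u ≠ w → ¬ G.Adj u w}) ⟨0, ∅, by simp, by simp⟩ (aux_indep_bdd G)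
  obtain ⟨S, h1, h2⟩ := h
  exact ⟨S, h1, h2⟩

lemma aux_dirDomNum_le (o : V → V → Prop) (S : Finset V) (h : IsDirDomSet o ↑S) :
    dirDomNum V o ≤ S.card :=
  Nat.sInf_le ⟨S, rfl, h⟩

lemma aux_exists_min_dom (o : V → V → Prop) :
    ∃ S : Finset V, S.card = dirDomNum V o ∧ IsDirDomSet o ↑S := by
  have h := Nat.sInf_mem (s := {n | ∃ S : Finset V, S.card = n ∧ IsDirDomSet o ↑S})
    ⟨Fintype.card V, Finset.univ, rfl, fun v hv => absurd (Finset.mem_coe.2 (Finset.mem_univ v)) hv⟩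
  obtain ⟨S, h1, h2⟩ := h
  exact ⟨S, h1, h2⟩

/-- Lower bound: there is an orientation whose domination number is at least `indepNum`. -/
lemma aux_lower : ∃ o, IsOrientation G o ∧ indepNum G ≤ dirDomNum V o := by
  classical
  obtain ⟨I, hIcard, hIindep⟩ := aux_exists_max_indep G
  let r : V → V → Prop := WellOrderingRel
  haveI : IsWellOrder V r := WellOrderingRel.isWellOrder
  set o : V → V → Prop := fun u v => G.Adj u v ∧ v ∉ I ∧ (u ∈ I ∨ r u v) with ho
  refine ⟨o, ⟨fun u v h => h.1, ?_, ?_⟩, ?_⟩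
  · intro u v hadj
    by_cases hu : u ∈ I
    · left
      refine ⟨hadj, fun hv => ?_, Or.inl hu⟩
      exact hIindep u hu v hv hadj.ne hadj
    · by_cases hv : v ∈ I
      · right
        refine ⟨hadj.symm, hu, Or.inl hv⟩
      · rcases trichotomous_of r u v with h | h | h
        · exact Or.inl ⟨hadj, hv, Or.inr h⟩
        · exact absurd h hadj.ne
        · exact Or.inr ⟨hadj.symm, hu, Or.inr h⟩
  · rintro u v ⟨-, hv, hu⟩ ⟨-, hu', hv'⟩
    rcases hu with hu | hru
    · exact hu' hu
    · rcases hv' with hv' | hrv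
      · exact hv hv'
      · exact asymm_of r hru hrv
  · obtain ⟨S, hScard, hSdom⟩ := aux_exists_min_dom o
    have hIS : I ⊆ S := by
      intro v hv
      by_contra hvS
      obtain ⟨u, -, -, hvI, -⟩ := hSdom v hvS
      exact hvI hv
    calc indepNum G = I.card := hIcard.symm
    _ ≤ S.card := Finset.card_le_card hIS
    _ = dirDomNum V o := hScard

lemma aux_key (hbip : G.Colorable 2) (o : V → V → Prop) (horient : IsOrientation G o) :
    ∃ (S I : Finset V), IsDirDomSet o ↑S ∧ (∀ u ∈ I, ∀ w ∈ I, u ≠ w → ¬ G.Adj u w) ∧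
      S.card ≤ I.card := by
  classical
  obtain ⟨C⟩ := hbip
  have fin2 : ∀ x : Fin 2, x ≠ 0 → x = 1 := by decide
  set A : Finset V := Finset.univ.filter (fun v => C v = 0) with hAdef
  set B : Finset V := Finset.univ.filter (fun v => C v ≠ 0) with hBdef
  have hBA : B = Finset.univ \ A := by
    ext v; simp [hAdef, hBdef]
  have hABcard : A.card + B.card = Fintype.card V := by
    have h : A.card ≤ Fintype.card V := by simpa using Finset.card_le_univ A
    rw [hBA, Finset.card_sdiff_of_subset (Finset.subset_univ A), Finset.card_univ]
    omega
  set nbr : Finset V → Finset V := fun s => Finset.univ.filter (fun b => ∃ a ∈ s, G.Adj a b)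
    with hnbrdef
  have hnbrB : ∀ s, s ⊆ A → nbr s ⊆ B := by
    intro s hs b hb
    simp only [hnbrdef, Finset.mem_filter, Finset.mem_univ, true_and] at hb
    obtain ⟨a, ha, hadj⟩ := hb
    have hCa : C a = 0 := (Finset.mem_filter.1 (hs ha)).2
    simp only [hBdef, Finset.mem_filter, Finset.mem_univ, true_and]
    intro hCb
    exact C.valid hadj (by rw [hCa, hCb])
  set d : ℕ := A.powerset.sup (fun s => s.card - (nbr s).card) with hddef
  have h1 : ∀ s, s ⊆ A → s.card ≤ (nbr s).card + d := by
    intro s hs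
    have h2 : s.card - (nbr s).card ≤ d :=
      Finset.le_sup (f := fun s => s.card - (nbr s).card) (Finset.mem_powerset.2 hs)
    omega
  -- Independent set of size ≥ B.card + d
  have hI : ∃ I : Finset V, (∀ u ∈ I, ∀ w ∈ I, u ≠ w → ¬ G.Adj u w) ∧ B.card + d ≤ I.card := by
    obtain ⟨S0, hS0mem, hS0⟩ := Finset.exists_mem_eq_sup A.powerset
      ⟨∅, Finset.empty_mem_powerset A⟩ (fun s => s.card - (nbr s).card)
    rcases Nat.eq_zero_or_pos d with hd0 | hdpos
    · refine ⟨B, ?_, by omega⟩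
      intro u hu w hw hne hadj
      have hu1 : C u = 1 := fin2 _ (Finset.mem_filter.1 hu).2
      have hw1 : C w = 1 := fin2 _ (Finset.mem_filter.1 hw).2
      exact C.valid hadj (by rw [hu1, hw1])
    · have hS0A : S0 ⊆ A := Finset.mem_powerset.1 hS0mem
      have hS0' : d = S0.card - (nbr S0).card := hS0
      have hle : (nbr S0).card ≤ S0.card := by omega
      have hnbB : (nbr S0).card ≤ B.card := Finset.card_le_card (hnbrB S0 hS0A)
      refine ⟨S0 ∪ (B \ nbr S0), ?_, ?_⟩
      · intro u hu w hw hne hadj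
        have hmemnbr : ∀ x ∈ S0, ∀ y, G.Adj x y → y ∈ nbr S0 := by
          intro x hx y hy
          simp only [hnbrdef, Finset.mem_filter, Finset.mem_univ, true_and]
          exact ⟨x, hx, hy⟩
        rcases Finset.mem_union.1 hu with hu | hu <;> rcases Finset.mem_union.1 hw with hw | hw
        · have h0u : C u = 0 := (Finset.mem_filter.1 (hS0A hu)).2
          have h0w : C w = 0 := (Finset.mem_filter.1 (hS0A hw)).2
          exact C.valid hadj (by rw [h0u, h0w])
        · exact (Finset.mem_sdiff.1 hw).2 (hmemnbr u hu w hadj)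
        · exact (Finset.mem_sdiff.1 hu).2 (hmemnbr w hw u hadj.symm)
        · have hu1 : C u = 1 := fin2 _ (Finset.mem_filter.1 (Finset.mem_sdiff.1 hu).1).2
          have hw1 : C w = 1 := fin2 _ (Finset.mem_filter.1 (Finset.mem_sdiff.1 hw).1).2
          exact C.valid hadj (by rw [hu1, hw1])
      · have hdisj : Disjoint S0 (B \ nbr S0) := by
          rw [Finset.disjoint_left]
          intro v hv hv'
          have h0 : C v = 0 := (Finset.mem_filter.1 (hS0A hv)).2
          exact (Finset.mem_filter.1 (Finset.mem_sdiff.1 hv').1).2 h0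
        rw [Finset.card_union_of_disjoint hdisj,
          Finset.card_sdiff_of_subset (hnbrB S0 hS0A)]
        omega
  -- Dominating set of size ≤ B.card + d, via Hall's theorem
  have hS : ∃ S : Finset V, IsDirDomSet o ↑S ∧ S.card ≤ B.card + d := by
    set inlE : V ↪ V ⊕ Fin d := ⟨Sum.inl, Sum.inl_injective⟩ with hinlE
    set inrE : Fin d ↪ V ⊕ Fin d := ⟨Sum.inr, Sum.inr_injective⟩ with hinrE
    set t : ↥A → Finset (V ⊕ Fin d) := fun a =>
      ((Finset.univ.filter (fun b => G.Adj ↑a b)).map inlE) ∪ (Finset.univ.map inrE) with htdef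
    have hall : ∀ s : Finset ↥A, s.card ≤ (s.biUnion t).card := by
      intro s
      rcases s.eq_empty_or_nonempty with rfl | hne
      · simp
      · set s' : Finset V := s.image Subtype.val with hs'def
        have hs'A : s' ⊆ A := by
          intro v hv
          rw [hs'def] at hv
          obtain ⟨a, _, rfl⟩ := Finset.mem_image.1 hv
          exact a.2
        have hs'card : s'.card = s.card := by
          rw [hs'def]; exact Finset.card_image_of_injective s Subtype.val_injective
        have hsub : (nbr s').map inlE ∪ Finset.univ.map inrE ⊆ s.biUnion t := by
          intro x hx
          rcases Finset.mem_union.1 hx with hx | hx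
          · obtain ⟨b, hb, rfl⟩ := Finset.mem_map.1 hx
            simp only [hnbrdef, Finset.mem_filter, Finset.mem_univ, true_and] at hb
            obtain ⟨a, ha, hadj⟩ := hb
            rw [hs'def] at ha
            obtain ⟨a', ha', rfl⟩ := Finset.mem_image.1 ha
            refine Finset.mem_biUnion.2 ⟨a', ha', ?_⟩
            exact Finset.mem_union_left _ (Finset.mem_map_of_mem _
              (Finset.mem_filter.2 ⟨Finset.mem_univ _, hadj⟩))
          · obtain ⟨a, ha⟩ := hne
            exact Finset.mem_biUnion.2 ⟨a, ha, Finset.mem_union_right _ hx⟩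
        have hdisj : Disjoint ((nbr s').map inlE) (Finset.univ.map inrE) := by
          rw [Finset.disjoint_left]
          rintro x hx hx'
          obtain ⟨b, -, rfl⟩ := Finset.mem_map.1 hx
          obtain ⟨k, -, hk⟩ := Finset.mem_map.1 hx'
          exact absurd hk (by simp [hinlE, hinrE])
        have hcard : ((nbr s').map inlE ∪ Finset.univ.map inrE).card = (nbr s').card + d := by
          rw [Finset.card_union_of_disjoint hdisj, Finset.card_map, Finset.card_map,
            Finset.card_univ, Fintype.card_fin]
        have hh := h1 s' hs'A
        calc s.card = s'.card := hs'card.symm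
          _ ≤ (nbr s').card + d := hh
          _ = ((nbr s').map inlE ∪ Finset.univ.map inrE).card := hcard.symm
          _ ≤ (s.biUnion t).card := Finset.card_le_card hsub
    obtain ⟨f, hfinj, hf⟩ := (Finset.all_card_le_biUnion_card_iff_exists_injective t).1 hall
    set A1 : Finset ↥A := Finset.univ.filter (fun a => (f a).isLeft = true) with hA1def
    have hpart : ∀ a ∈ A1, ∃ b, f a = Sum.inl b ∧ G.Adj ↑a b := by
      intro a ha
      have hfa := hf a
      rcases Finset.mem_union.1 hfa with h | h
      · obtain ⟨b, hb, hfb⟩ := Finset.mem_map.1 h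
        exact ⟨b, hfb.symm, (Finset.mem_filter.1 hb).2⟩
      · exfalso
        obtain ⟨k, -, hfk⟩ := Finset.mem_map.1 h
        have hL := (Finset.mem_filter.1 ha).2
        rw [← hfk] at hL
        simp [hinrE] at hL
    set pb : ↥A → V := fun a => if h : ∃ b, f a = Sum.inl b ∧ G.Adj ↑a b then h.choose else ↑a
      with hpbdef
    have hpb : ∀ a ∈ A1, f a = Sum.inl (pb a) ∧ G.Adj ↑a (pb a) := by
      intro a ha
      have hex := hpart a ha
      simp only [hpbdef, dif_pos hex]
      exact hex.choose_spec
    -- card bound for A1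
    have hA1card : A.card ≤ A1.card + d := by
      set A2 : Finset ↥A := Finset.univ.filter (fun a => ¬ (f a).isLeft = true) with hA2def
      have hsplit : A1.card + A2.card = A.card := by
        rw [hA1def, hA2def, Finset.card_filter_add_card_filter_not,
          Finset.card_univ, Fintype.card_coe]
      have hA2d : A2.card ≤ d := by
        have himg : A2.card = (A2.image f).card :=
          (Finset.card_image_of_injective A2 hfinj).symm
        have hsub2 : A2.image f ⊆ Finset.univ.map inrE := by
          intro x hx
          obtain ⟨a, ha, rfl⟩ := Finset.mem_image.1 hx
          have hR := (Finset.mem_filter.1 ha).2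
          rcases hfa : f a with b | k
          · rw [hfa] at hR; simp at hR
          · exact Finset.mem_map.2 ⟨k, Finset.mem_univ _, rfl⟩
        have := Finset.card_le_card hsub2
        rw [Finset.card_map, Finset.card_univ, Fintype.card_fin] at this
        omega
      omega
    -- distinctness facts
    have hane : ∀ a ∈ A1, (↑a : V) ≠ pb a := fun a ha => (hpb a ha).2.ne
    have hCpb : ∀ a ∈ A1, C (pb a) ≠ 0 := by
      intro a ha h0
      have hCa : C ↑a = 0 := (Finset.mem_filter.1 a.2).2
      exact C.valid (hpb a ha).2 (by rw [hCa, h0])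
    have hkey : ∀ a ∈ A1, ∀ a' ∈ A1, a ≠ a' →
        (↑a : V) ≠ ↑a' ∧ pb a ≠ pb a' ∧ (↑a : V) ≠ pb a' ∧ pb a ≠ ↑a' := by
      intro a ha a' ha' hne
      refine ⟨fun h => hne (Subtype.coe_injective h), ?_, ?_, ?_⟩
      · intro h
        apply hne
        apply hfinj
        rw [(hpb a ha).1, (hpb a' ha').1, h]
      · intro h
        exact hCpb a' ha' (h ▸ (Finset.mem_filter.1 a.2).2)
      · intro h
        exact hCpb a ha (h.symm ▸ (Finset.mem_filter.1 a'.2).2)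
    set hd' : ↥A → V := fun a => if o ↑a (pb a) then pb a else ↑a with hhddef
    set tl : ↥A → V := fun a => if o ↑a (pb a) then ↑a else pb a with htldef
    have hinj : Set.InjOn hd' ↑A1 := by
      intro a ha a' ha' heq
      by_contra hne
      obtain ⟨h1', h2', h3', h4'⟩ := hkey a (Finset.mem_coe.1 ha) a' (Finset.mem_coe.1 ha') hne
      by_cases c1 : o ↑a (pb a) <;> by_cases c2 : o ↑a' (pb a')
      · simp only [hhddef, if_pos c1, if_pos c2] at heq; exact h2' heq
      · simp only [hhddef, if_pos c1, if_neg c2] at heq; exact h4' heq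
      · simp only [hhddef, if_neg c1, if_pos c2] at heq; exact h3' heq
      · simp only [hhddef, if_neg c1, if_neg c2] at heq; exact h1' heq
    set H : Finset V := A1.image hd' with hHdef
    have hHcard : H.card = A1.card := Finset.card_image_of_injOn hinj
    have htlhd : ∀ a ∈ A1, tl a ≠ hd' a := by
      intro a ha
      by_cases c1 : o ↑a (pb a)
      · simp only [htldef, hhddef, if_pos c1]; exact hane a ha
      · simp only [htldef, hhddef, if_neg c1]; exact (hane a ha).symm
    refine ⟨Finset.univ \ H, ?_, ?_⟩
    · intro v hv
      have hvH : v ∈ H := by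
        by_contra h
        exact hv (Finset.mem_coe.2 (Finset.mem_sdiff.2 ⟨Finset.mem_univ v, h⟩))
      obtain ⟨a, ha, hva⟩ := Finset.mem_image.1 hvH
      refine ⟨tl a, ?_, ?_⟩
      · refine Finset.mem_coe.2 (Finset.mem_sdiff.2 ⟨Finset.mem_univ _, ?_⟩)
        intro hcon
        obtain ⟨a', ha', hva'⟩ := Finset.mem_image.1 hcon
        by_cases heq : a' = a
        · subst heq
          exact htlhd a' ha' hva'.symm
        · obtain ⟨h1', h2', h3', h4'⟩ := hkey a' ha' a ha heq
          by_cases c1 : o ↑a' (pb a') <;> by_cases c2 : o ↑a (pb a)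
          · simp only [hhddef, htldef, if_pos c1, if_pos c2] at hva'; exact h4' hva'
          · simp only [hhddef, htldef, if_pos c1, if_neg c2] at hva'; exact h2' hva'
          · simp only [hhddef, htldef, if_neg c1, if_pos c2] at hva'; exact h1' hva'
          · simp only [hhddef, htldef, if_neg c1, if_neg c2] at hva'; exact h3' hva'
      · rw [← hva]
        by_cases c1 : o ↑a (pb a)
        · simp only [htldef, hhddef, if_pos c1]; exact c1
        · simp only [htldef, hhddef, if_neg c1]
          rcases horient.2.1 _ _ (hpb a ha).2 with h | h
          · exact absurd h c1
          · exact h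
    · have hsd : (Finset.univ \ H).card = Fintype.card V - H.card := by
        rw [Finset.card_sdiff_of_subset (Finset.subset_univ H), Finset.card_univ]
      have hHle : H.card ≤ Fintype.card V := Finset.card_le_univ H
      omega
  obtain ⟨S, hSdom, hScard⟩ := hS
  obtain ⟨I, hIind, hIcard⟩ := hI
  exact ⟨S, I, hSdom, hIind, le_trans hScard hIcard⟩

/-- Upper bound: every orientation of a bipartite graph has domination number
at most `indepNum`. -/
lemma aux_upper (hbip : G.Colorable 2) (o : V → V → Prop) (horient : IsOrientation G o) :
    dirDomNum V o ≤ indepNum G := by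
  obtain ⟨S, I, hSdom, hIind, hcard⟩ := aux_key G hbip o horient
  calc dirDomNum V o ≤ S.card := aux_dirDomNum_le o S hSdom
    _ ≤ I.card := hcard
    _ ≤ indepNum G := aux_indep_le_indepNum G I hIind

end Aux

theorem stmt11 {V : Type*} [Fintype V] (G : SimpleGraph V) (hbip : G.Colorable 2) :
    GammaD G = indepNum G := by
  obtain ⟨o, ho, hlo⟩ := aux_lower G
  have heq : dirDomNum V o = indepNum G := le_antisymm (aux_upper G hbip o ho) hlo
  have hmem : indepNum G ∈ {n | ∃ o, IsOrientation G o ∧ dirDomNum V o = n} := ⟨o, ho, heq⟩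
  refine le_antisymm (csSup_le ⟨_, hmem⟩ ?_) (le_csSup ⟨indepNum G, ?_⟩ hmem)
  · rintro n ⟨o', ho', rfl⟩
    exact aux_upper G hbip o' ho'
  · rintro n ⟨o', ho', rfl⟩
    exact aux_upper G hbip o' ho'
end

section
/- If G is a graph of order n, then Γ_d(G) ≤ (n + α(G))/2, where α(G) is the independence number. -/
lemma key {V : Type*} [Fintype V] [DecidableEq V] (G : SimpleGraph V)
    (o : V → V → Prop) (ho : IsOrientation G o) (A : Finset V) :
    ∃ S : Finset V, S ⊆ A ∧ (∀ v ∈ A, v ∉ S → ∃ u ∈ S, o u v) ∧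
      2 * S.card ≤ A.card + indepNum G := by
  induction A using Finset.strongInduction with
  | _ A ih =>
    by_cases h : ∃ u ∈ A, ∃ v ∈ A, o u v
    · obtain ⟨u, hu, v, hv, huv⟩ := h
      have hne : u ≠ v := (ho.1 u v huv).ne
      have hssub : A \ {u, v} ⊂ A := by
        refine Finset.ssubset_iff_of_subset (Finset.sdiff_subset) |>.mpr ⟨u, hu, ?_⟩
        simp
      obtain ⟨S', hS'sub, hS'dom, hS'card⟩ := ih _ hssub
      have huS' : u ∉ S' := fun hc => by
        have := hS'sub hc; simp at this
      refine ⟨insert u S', ?_, ?_, ?_⟩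
      · intro x hx
        rcases Finset.mem_insert.mp hx with rfl | hx
        · exact hu
        · exact (Finset.sdiff_subset) (hS'sub hx)
      · intro w hw hwn
        by_cases hwv : w = v
        · exact ⟨u, Finset.mem_insert_self u S', hwv ▸ huv⟩
        · by_cases hwu : w = u
          · exact absurd (hwu ▸ Finset.mem_insert_self u S') hwn
          · have hwA : w ∈ A \ {u, v} := by
              simp [hwu, hwv, hw]
            obtain ⟨x, hxS, hxw⟩ := hS'dom w hwA (fun hc => hwn (Finset.mem_insert_of_mem hc))
            exact ⟨x, Finset.mem_insert_of_mem hxS, hxw⟩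
      · have hpair : ({u, v} : Finset V) ⊆ A := by
          intro x hx; rcases Finset.mem_insert.mp hx with rfl | hx
          · exact hu
          · simp at hx; exact hx ▸ hv
        have hcard2 : ({u, v} : Finset V).card = 2 := Finset.card_pair hne
        have hA2 : 2 ≤ A.card := hcard2 ▸ Finset.card_le_card hpair
        have hsd : (A \ {u, v}).card = A.card - 2 := by
          rw [Finset.card_sdiff_of_subset hpair, hcard2]
        rw [Finset.card_insert_of_notMem huS']
        omega
    · refine ⟨A, Finset.Subset.refl _, fun v hv hnv => absurd hv hnv, ?_⟩
      have : A.card ≤ indepNum G := by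
        apply le_csSup
        · exact ⟨Fintype.card V, fun n ⟨S, hS, _⟩ => hS ▸ S.card_le_univ⟩
        · refine ⟨A, rfl, fun x hx y hy hxy hadj => ?_⟩
          rcases ho.2.1 x y hadj with hxy' | hyx'
          · exact h ⟨x, hx, y, hy, hxy'⟩
          · exact h ⟨y, hy, x, hx, hyx'⟩
      omega

theorem stmt14 {V : Type*} [Fintype V] (G : SimpleGraph V) :
    2 * GammaD G ≤ Fintype.card V + indepNum G := by
  classical
  have hbound : ∀ m ∈ {n | ∃ o, IsOrientation G o ∧ dirDomNum V o = n},
      2 * m ≤ Fintype.card V + indepNum G := by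
    rintro m ⟨o, ho, rfl⟩
    obtain ⟨S, -, hdom, hcard⟩ := key G o ho Finset.univ
    have h1 : dirDomNum V o ≤ S.card :=
      Nat.sInf_le ⟨S, rfl, fun v hv => hdom v (Finset.mem_univ v) (by simpa using hv)⟩
    rw [Finset.card_univ] at hcard
    omega
  have hle : GammaD G ≤ (Fintype.card V + indepNum G) / 2 := by
    apply csSup_le'
    intro m hm
    have := hbound m hm
    omega
  omega
end

section
/- For r ≥ 2, if G is an r-regular graph of order n, then Γ_d(G) ≤ n(r+2)/(2(r+1)). -/
section Aux

open Finset
open scoped Classical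
set_option linter.unusedSectionVars false

variable {V : Type*} [Fintype V]

/-- out-degree of `v` within `W`. -/
noncomputable def od (o : V → V → Prop) (W : Finset V) (v : V) : ℕ :=
  (W.filter fun u => o v u).card

/-- in-degree of `v` within `W`. -/
noncomputable def idg (o : V → V → Prop) (W : Finset V) (v : V) : ℕ :=
  (W.filter fun u => o u v).card

/-- number of (directed) edges inside `W`. -/
noncomputable def mm (o : V → V → Prop) (W : Finset V) : ℕ := ∑ v ∈ W, od o W v

/-- ordered pair count. -/
noncomputable def FF (o : V → V → Prop) (P Q : Finset V) : ℕ :=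
  ∑ a ∈ P, ∑ b ∈ Q, if o a b then 1 else 0

lemma FF_WW (o : V → V → Prop) (W : Finset V) : FF o W W = mm o W := by
  simp only [FF, mm, od, Finset.card_filter]

lemma sum_idg_eq (o : V → V → Prop) (W : Finset V) :
    ∑ v ∈ W, idg o W v = mm o W := by
  simp only [mm, od, idg, Finset.card_filter]
  exact Finset.sum_comm

lemma FF_left (o : V → V → Prop) {X W : Finset V} (hX : X ⊆ W) (Q : Finset V) :
    FF o W Q = FF o (W \ X) Q + FF o X Q := (Finset.sum_sdiff hX).symm

lemma FF_X_W (o : V → V → Prop) (X W : Finset V) :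
    FF o X W = ∑ a ∈ X, od o W a := by
  simp only [FF, od, Finset.card_filter]

lemma FF_W_X (o : V → V → Prop) (X W : Finset V) :
    FF o W X = ∑ b ∈ X, idg o W b := by
  rw [FF, Finset.sum_comm]
  simp only [idg, Finset.card_filter]

lemma mm_split (o : V → V → Prop) {X W : Finset V} (hX : X ⊆ W) :
    mm o W + FF o X X = mm o (W \ X) + FF o X W + FF o W X := by
  have h1 : FF o W W = FF o (W \ X) W + FF o X W := FF_left o hX W
  have h2 : FF o (W \ X) W = FF o (W \ X) (W \ X) + FF o (W \ X) X := by
    unfold FF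
    rw [← Finset.sum_add_distrib]
    refine Finset.sum_congr rfl fun a _ => ?_
    exact (Finset.sum_sdiff hX).symm
  have h3 : FF o W X = FF o (W \ X) X + FF o X X := FF_left o hX X
  have h4 := FF_WW o W
  have h5 := FF_WW o (W \ X)
  omega

lemma od_mono (o : V → V → Prop) (W : Finset V) (v : V) : od o W v ≤ od o univ v :=
  Finset.card_le_card (Finset.filter_subset_filter _ (Finset.subset_univ W))

lemma idg_mono (o : V → V → Prop) (W : Finset V) (v : V) : idg o W v ≤ idg o univ v :=
  Finset.card_le_card (Finset.filter_subset_filter _ (Finset.subset_univ W))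

lemma double_count (o : V → V → Prop) (W : Finset V) (g : V → ℕ) :
    ∑ v ∈ W, ∑ a ∈ W.filter (fun u => o v u), g a = ∑ a ∈ W, idg o W a * g a := by
  have h1 : ∀ v ∈ W, ∑ a ∈ W.filter (fun u => o v u), g a
      = ∑ a ∈ W, if o v a then g a else 0 := by
    intro v _
    rw [Finset.sum_filter]
  rw [Finset.sum_congr rfl h1, Finset.sum_comm]
  refine Finset.sum_congr rfl fun a _ => ?_
  rw [← Finset.sum_filter, Finset.sum_const, smul_eq_mul, idg, mul_comm]

lemma good_vertex (o : V → V → Prop) (r : ℕ)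
    (hA : ∀ u v, o u v → ¬ o v u)
    (hdeg : ∀ v, od o univ v + idg o univ v ≤ r)
    {W : Finset V} (hW : W.Nonempty) :
    ∃ v ∈ W, ∑ a ∈ insert v (W.filter fun u => o v u), (od o W a + idg o W a)
      ≤ (r + 2) * od o W v := by
  by_contra h
  push_neg at h
  set g : V → ℕ := fun a => od o W a + idg o W a with hg
  have hgle : ∀ a, g a ≤ r := fun a =>
    le_trans (add_le_add (od_mono o W a) (idg_mono o W a)) (hdeg a)
  have hnotmem : ∀ v : V, v ∉ W.filter fun u => o v u := by
    intro v hv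
    exact hA v v (Finset.mem_filter.1 hv).2 (Finset.mem_filter.1 hv).2
  have hsum : ∑ v ∈ W, ∑ a ∈ insert v (W.filter fun u => o v u), g a
      = (∑ v ∈ W, g v) + ∑ v ∈ W, ∑ a ∈ W.filter (fun u => o v u), g a := by
    rw [← Finset.sum_add_distrib]
    refine Finset.sum_congr rfl fun v _ => ?_
    rw [Finset.sum_insert (hnotmem v)]
  have hgsum : ∑ v ∈ W, g v = mm o W + mm o W := by
    rw [hg, Finset.sum_add_distrib, sum_idg_eq]
    rfl
  have hdc : ∑ v ∈ W, ∑ a ∈ W.filter (fun u => o v u), g a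
      = ∑ a ∈ W, idg o W a * g a := double_count o W g
  have hdcle : ∑ a ∈ W, idg o W a * g a ≤ r * mm o W := by
    calc ∑ a ∈ W, idg o W a * g a ≤ ∑ a ∈ W, idg o W a * r :=
          Finset.sum_le_sum fun a _ => Nat.mul_le_mul_left _ (hgle a)
      _ = (∑ a ∈ W, idg o W a) * r := by rw [Finset.sum_mul]
      _ = r * mm o W := by rw [sum_idg_eq, mul_comm]
  have hlow : ∑ v ∈ W, ((r + 2) * od o W v + 1)
      ≤ ∑ v ∈ W, ∑ a ∈ insert v (W.filter fun u => o v u), g a :=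
    Finset.sum_le_sum fun v hv => Nat.succ_le_of_lt (h v hv)
  have hlow2 : ∑ v ∈ W, ((r + 2) * od o W v + 1) = (r + 2) * mm o W + W.card := by
    rw [Finset.sum_add_distrib, ← Finset.mul_sum, Finset.sum_const, smul_eq_mul, mul_one]
    rfl
  have hcard : 0 < W.card := Finset.card_pos.2 hW
  have : (r + 2) * mm o W + W.card ≤ mm o W + mm o W + r * mm o W := by
    calc (r + 2) * mm o W + W.card = ∑ v ∈ W, ((r + 2) * od o W v + 1) := hlow2.symm
      _ ≤ ∑ v ∈ W, ∑ a ∈ insert v (W.filter fun u => o v u), g a := hlow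
      _ = (∑ v ∈ W, g v) + ∑ v ∈ W, ∑ a ∈ W.filter (fun u => o v u), g a := hsum
      _ ≤ mm o W + mm o W + r * mm o W := by rw [hgsum, hdc]; exact Nat.add_le_add_left hdcle _
  have hrn : (r + 2) * mm o W = mm o W + mm o W + r * mm o W := by ring
  omega

lemma key_lemma (o : V → V → Prop) (r : ℕ)
    (hA : ∀ u v, o u v → ¬ o v u)
    (hdeg : ∀ v, od o univ v + idg o univ v ≤ r) :
    ∀ W : Finset V, ∃ S : Finset V, S ⊆ W ∧ (∀ v ∈ W, v ∉ S → ∃ u ∈ S, o u v) ∧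
      (r + 1) * S.card + mm o W ≤ (r + 1) * W.card := by
  intro W
  induction W using Finset.strongInduction with
  | _ W ih =>
  rcases W.eq_empty_or_nonempty with rfl | hW
  · exact ⟨∅, by simp, by simp, by simp [mm]⟩
  obtain ⟨v, hvW, hgood⟩ := good_vertex o r hA hdeg hW
  set N := W.filter (fun u => o v u) with hN
  set X := insert v N with hX
  have hXW : X ⊆ W := by
    intro x hx
    rcases Finset.mem_insert.1 hx with rfl | hx
    · exact hvW
    · exact (Finset.mem_filter.1 hx).1
  have hFXX : od o W v ≤ FF o X X := by
    have hvX : v ∈ X := Finset.mem_insert_self _ _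
    have h1 : FF o X X = FF o (X \ {v}) X + FF o {v} X :=
      FF_left o (Finset.singleton_subset_iff.2 hvX) X
    have h2 : FF o {v} X = od o X v := by
      simp only [FF, Finset.sum_singleton, od, Finset.card_filter]
    have h3 : od o X v = od o W v := by
      unfold od; congr 1
      ext u
      simp only [Finset.mem_filter, hX, Finset.mem_insert, hN]
      constructor
      · rintro ⟨h4 | ⟨h4, _⟩, h5⟩
        · subst h4; exact (hA u u h5 h5).elim
        · exact ⟨h4, h5⟩
      · rintro ⟨h4, h5⟩
        exact ⟨Or.inr ⟨h4, h5⟩, h5⟩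
    omega
  have hsplit := mm_split o hXW
  have hsum2 : FF o X W + FF o W X = ∑ a ∈ X, (od o W a + idg o W a) := by
    rw [FF_X_W, FF_W_X, ← Finset.sum_add_distrib]
  have hgood' : ∑ a ∈ X, (od o W a + idg o W a) ≤ (r + 2) * od o W v := hgood
  have e1 : (r + 2) * od o W v = (r + 1) * od o W v + od o W v := by ring
  have hmmW : mm o W ≤ mm o (W \ X) + (r + 1) * od o W v := by
    linarith [hsplit, hFXX, hgood', e1, hsum2]
  have hss : W \ X ⊂ W := by
    have : v ∈ W ∧ v ∈ X := ⟨hvW, Finset.mem_insert_self _ _⟩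
    refine Finset.ssubset_iff_of_subset (Finset.sdiff_subset) |>.2 ⟨v, hvW, ?_⟩
    simp [this.2]
  obtain ⟨S', hS'sub, hS'dom, hS'ineq⟩ := ih (W \ X) hss
  have hvnotN : v ∉ N := by
    intro hv
    exact hA v v (Finset.mem_filter.1 hv).2 (Finset.mem_filter.1 hv).2
  refine ⟨insert v S', ?_, ?_, ?_⟩
  · exact Finset.insert_subset hvW (hS'sub.trans Finset.sdiff_subset)
  · intro w hwW hwS
    by_cases hwX : w ∈ X
    · rcases Finset.mem_insert.1 hwX with rfl | hwN
      · exact absurd (Finset.mem_insert_self w S') hwS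
      · exact ⟨v, Finset.mem_insert_self _ _, (Finset.mem_filter.1 hwN).2⟩
    · obtain ⟨u, huS', hu⟩ := hS'dom w (Finset.mem_sdiff.2 ⟨hwW, hwX⟩)
        (fun hc => hwS (Finset.mem_insert_of_mem hc))
      exact ⟨u, Finset.mem_insert_of_mem huS', hu⟩
  · have hcX : X.card = od o W v + 1 := by
      rw [hX, Finset.card_insert_of_notMem hvnotN, od, ← hN]
    have hWsplit : (W \ X).card + X.card = W.card :=
      Finset.card_sdiff_add_card_eq_card hXW
    have h6 : (r + 1) * (insert v S').card ≤ (r + 1) * (S'.card + 1) :=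
      Nat.mul_le_mul_left _ (Finset.card_insert_le _ _)
    nlinarith [hS'ineq, hmmW, h6, hcX, hWsplit]

lemma deg_eq {G : SimpleGraph V} [DecidableRel G.Adj] {o : V → V → Prop}
    (ho : IsOrientation G o) (v : V) :
    od o univ v + idg o univ v = G.degree v := by
  obtain ⟨h1, h2, h3⟩ := ho
  have hdisj : Disjoint (univ.filter fun u => o v u) (univ.filter fun u => o u v) := by
    rw [Finset.disjoint_filter]
    intro u _ hvu huv
    exact h3 v u hvu huv
  have hunion : (univ.filter fun u => o v u) ∪ (univ.filter fun u => o u v)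
      = G.neighborFinset v := by
    ext u
    simp only [Finset.mem_union, Finset.mem_filter, Finset.mem_univ, true_and,
      SimpleGraph.mem_neighborFinset]
    constructor
    · rintro (h | h)
      · exact h1 v u h
      · exact (h1 u v h).symm
    · intro h
      exact h2 v u h
  rw [od, idg, ← Finset.card_union_of_disjoint hdisj, hunion]
  rfl

lemma two_mm (o : V → V → Prop) (r : ℕ)
    (hdeg : ∀ v, od o univ v + idg o univ v = r) :
    2 * mm o (univ : Finset V) = Fintype.card V * r := by
  have h1 : ∑ v ∈ (univ : Finset V), (od o univ v + idg o univ v) = Fintype.card V * r := by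
    rw [Finset.sum_congr rfl fun v _ => hdeg v, Finset.sum_const, smul_eq_mul,
      Finset.card_univ]
  rw [Finset.sum_add_distrib, sum_idg_eq] at h1
  have h2 : ∑ v ∈ (univ : Finset V), od o univ v = mm o univ := rfl
  omega

lemma orient_bound {G : SimpleGraph V} [DecidableRel G.Adj] {r : ℕ}
    (hreg : G.IsRegularOfDegree r) {o : V → V → Prop} (ho : IsOrientation G o) :
    2 * (r + 1) * sInf {n | ∃ S : Finset V, S.card = n ∧ ∀ v, v ∉ (S : Set V) → ∃ u ∈ (S : Set V), o u v}
      ≤ Fintype.card V * (r + 2) := by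
  have hdeg : ∀ v, od o univ v + idg o univ v = r := by
    intro v; rw [deg_eq ho v, hreg v]
  obtain ⟨S, hSsub, hSdom, hSineq⟩ := key_lemma o r ho.2.2 (fun v => le_of_eq (hdeg v)) univ
  have hmem : sInf {n | ∃ S : Finset V, S.card = n ∧
      ∀ v, v ∉ (S : Set V) → ∃ u ∈ (S : Set V), o u v} ≤ S.card := by
    apply Nat.sInf_le
    refine ⟨S, rfl, fun v hv => ?_⟩
    obtain ⟨u, hu, huv⟩ := hSdom v (Finset.mem_univ v) (by simpa using hv)
    exact ⟨u, by simpa using hu, huv⟩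
  have h2m := two_mm o r hdeg
  have hmul : 2 * ((r + 1) * S.card) + 2 * mm o univ ≤ 2 * ((r + 1) * Fintype.card V) := by
    have : (r+1) * S.card + mm o univ ≤ (r+1) * (univ : Finset V).card := hSineq
    rw [Finset.card_univ] at this
    omega
  have hid : 2 * ((r + 1) * Fintype.card V) = Fintype.card V * (r + 2) + Fintype.card V * r := by
    ring
  nlinarith [hmem, hmul, h2m, hid]

end Aux

theorem stmt15 {V : Type*} [Fintype V] (G : SimpleGraph V) [DecidableRel G.Adj] (r : ℕ) (hr : 2 ≤ r)
    (hreg : G.IsRegularOfDegree r) :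
    2 * (r + 1) * GammaD G ≤ Fintype.card V * (r + 2) := by
  classical
  have hb : ∀ k ∈ {n | ∃ o, IsOrientation G o ∧ dirDomNum V o = n},
      2 * (r + 1) * k ≤ Fintype.card V * (r + 2) := by
    rintro k ⟨o, ho, rfl⟩
    have := orient_bound hreg ho
    simpa [dirDomNum, IsDirDomSet] using this
  by_cases hne : {n | ∃ o, IsOrientation G o ∧ dirDomNum V o = n}.Nonempty
  · have hbdd : BddAbove {n | ∃ o, IsOrientation G o ∧ dirDomNum V o = n} := by
      refine ⟨Fintype.card V * (r + 2), fun k hk => ?_⟩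
      have h1 : k ≤ 2 * (r + 1) * k := Nat.le_mul_of_pos_left k (by positivity)
      exact h1.trans (hb k hk)
    have hsup := Nat.sSup_mem hne hbdd
    exact hb _ hsup
  · rw [Set.not_nonempty_iff_eq_empty] at hne
    rw [GammaD, hne]
    simp
end

section
/- If G is the cycle C_n on n ≥ 3 vertices, then Γ_d(G) = ⌈n/2⌉. -/
/- Auxiliary material -/

lemma adj_consec {n : ℕ} (hn : 3 ≤ n) (a b : ℕ) (hb : b < n) (hab : b = a + 1) :
    (SimpleGraph.cycleGraph n).Adj ⟨a, by omega⟩ ⟨b, hb⟩ := by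
  rw [SimpleGraph.cycleGraph_adj']
  right
  rw [Fin.sub_def]
  show (n - a + b) % n = 1
  have h1 : n - a + b = n + 1 := by omega
  rw [h1, Nat.add_mod_left, Nat.mod_eq_of_lt (by omega)]

/-- For every orientation of the cycle, there is a dominating set of size ≤ ⌈n/2⌉. -/
lemma upper_bound {n : ℕ} (hn : 3 ≤ n) (o : Fin n → Fin n → Prop)
    (ho : IsOrientation (SimpleGraph.cycleGraph n) o) :
    dirDomNum (Fin n) o ≤ (n + 1) / 2 := by
  classical
  set pick : ℕ → Fin n := fun k =>
    if h2 : 2 * k + 1 < n then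
      (if o ⟨2 * k, by omega⟩ ⟨2 * k + 1, h2⟩ then (⟨2 * k, by omega⟩ : Fin n)
       else ⟨2 * k + 1, h2⟩)
    else if h1 : 2 * k < n then ⟨2 * k, h1⟩ else ⟨0, by omega⟩ with hpick
  set S : Finset (Fin n) := (Finset.range ((n + 1) / 2)).image pick with hS
  have hdom : IsDirDomSet o ↑S := by
    intro v hv
    have hvS : v ∉ S := by simpa using hv
    set k := v.val / 2 with hk
    have hklt : k < (n + 1) / 2 := by
      have := v.isLt; omega
    have hmem : pick k ∈ S := Finset.mem_image_of_mem _ (Finset.mem_range.mpr hklt)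
    have hne : pick k ≠ v := fun h => hvS (h ▸ hmem)
    clear_value k
    rcases Nat.even_or_odd v.val with he | hodd
    · -- v is at even position 2k
      obtain ⟨c, hc⟩ := he
      have hv2 : v.val = 2 * k := by omega
      by_cases h2 : 2 * k + 1 < n
      · by_cases ho1 : o ⟨2 * k, by omega⟩ ⟨2 * k + 1, h2⟩
        · exfalso
          apply hne
          simp only [hpick]
          rw [dif_pos h2, if_pos ho1]
          exact Fin.ext hv2.symm
        · refine ⟨⟨2 * k + 1, h2⟩, ?_, ?_⟩
          · have hpk : pick k = ⟨2 * k + 1, h2⟩ := by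
              simp only [hpick]; rw [dif_pos h2, if_neg ho1]
            rw [← hpk]
            exact_mod_cast hmem
          · have hadj := adj_consec hn (2 * k) (2 * k + 1) h2 rfl
            rcases ho.2.1 _ _ hadj with h | h
            · exact absurd h ho1
            · have hveq : v = ⟨2 * k, Nat.lt_of_succ_lt h2⟩ := Fin.ext hv2
              rw [hveq]
              exact h
      · exfalso
        apply hne
        have h1 : 2 * k < n := by have := v.isLt; omega
        simp only [hpick]
        rw [dif_neg h2, dif_pos h1]
        exact Fin.ext hv2.symm
    · -- v is at odd position 2k+1
      obtain ⟨c, hc⟩ := hodd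
      have hv2 : v.val = 2 * k + 1 := by omega
      have h2 : 2 * k + 1 < n := by have := v.isLt; omega
      by_cases ho1 : o ⟨2 * k, by omega⟩ ⟨2 * k + 1, h2⟩
      · refine ⟨⟨2 * k, Nat.lt_of_succ_lt h2⟩, ?_, ?_⟩
        · have hpk : pick k = ⟨2 * k, Nat.lt_of_succ_lt h2⟩ := by
            simp only [hpick]; rw [dif_pos h2, if_pos ho1]
          rw [← hpk]
          exact_mod_cast hmem
        · have hveq : v = ⟨2 * k + 1, h2⟩ := Fin.ext hv2
          rw [hveq]
          exact ho1
      · exfalso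
        apply hne
        simp only [hpick]
        rw [dif_pos h2, if_neg ho1]
        exact Fin.ext hv2.symm
  have hcard : S.card ≤ (n + 1) / 2 := by
    calc S.card ≤ (Finset.range ((n + 1) / 2)).card := Finset.card_image_le
      _ = (n + 1) / 2 := Finset.card_range _
  exact le_trans (Nat.sInf_le ⟨S, rfl, hdom⟩) hcard

/-- The directed cycle orientation. -/
def ocyc (n : ℕ) [NeZero n] : Fin n → Fin n → Prop := fun u v => v = u + 1

lemma ocyc_orient {n : ℕ} [NeZero n] (hn : 3 ≤ n) :
    IsOrientation (SimpleGraph.cycleGraph n) (ocyc n) := by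
  have hone : (1 : Fin n).val = 1 := by
    rw [Fin.val_one', Nat.mod_eq_of_lt (by omega)]
  refine ⟨?_, ?_, ?_⟩
  · intro u v h
    have h' : v = u + 1 := h
    subst h'
    rw [SimpleGraph.cycleGraph_adj']
    right
    rw [add_sub_cancel_left, hone]
  · intro u v hadj
    rw [SimpleGraph.cycleGraph_adj'] at hadj
    rcases hadj with h | h
    · right
      show u = v + 1
      have hsub : u - v = 1 := Fin.ext (by rw [h, hone])
      rw [sub_eq_iff_eq_add] at hsub
      rw [hsub, add_comm]
    · left
      show v = u + 1
      have hsub : v - u = 1 := Fin.ext (by rw [h, hone])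
      rw [sub_eq_iff_eq_add] at hsub
      rw [hsub, add_comm]
  · intro u v h1 h2
    have e1 : v = u + 1 := h1
    have e2 : u = v + 1 := h2
    rw [e1, add_assoc] at e2
    have h2' : (1 : Fin n) + 1 = 0 := (left_eq_add.mp e2)
    have h3 := congrArg Fin.val h2'
    rw [Fin.val_add, Fin.val_one', Fin.val_zero,
      Nat.mod_eq_of_lt (show 1 < n by omega)] at h3
    rw [Nat.mod_eq_of_lt (show 1 + 1 < n by omega)] at h3
    omega

lemma ocyc_lower {n : ℕ} [NeZero n] (hn : 3 ≤ n) (S : Finset (Fin n))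
    (hdom : IsDirDomSet (ocyc n) ↑S) : (n + 1) / 2 ≤ S.card := by
  have hmap : ∀ v ∈ Sᶜ, v - 1 ∈ S := by
    intro v hv
    obtain ⟨u, hu, huv⟩ := hdom v (by simpa using hv)
    have huv' : v = u + 1 := huv
    have : u = v - 1 := by rw [huv', add_sub_cancel_right]
    rwa [← this]
  have hinj : Set.InjOn (fun v : Fin n => v - 1) ↑Sᶜ := by
    intro a _ b _ hab
    exact sub_left_inj.mp hab
  have hcard : Sᶜ.card ≤ S.card := Finset.card_le_card_of_injOn _ hmap hinj
  have h1 : Sᶜ.card = n - S.card := by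
    rw [Finset.card_compl, Fintype.card_fin]
  have h2 : S.card ≤ n := by
    calc S.card ≤ Fintype.card (Fin n) := Finset.card_le_univ S
      _ = n := Fintype.card_fin n
  omega

lemma ocyc_dirDomNum {n : ℕ} [NeZero n] (hn : 3 ≤ n) :
    dirDomNum (Fin n) (ocyc n) = (n + 1) / 2 := by
  refine le_antisymm (upper_bound hn _ (ocyc_orient hn)) ?_
  have hne : {m | ∃ S : Finset (Fin n), S.card = m ∧ IsDirDomSet (ocyc n) ↑S}.Nonempty := by
    refine ⟨(Finset.univ : Finset (Fin n)).card, Finset.univ, rfl, ?_⟩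
    intro v hv
    exact absurd (by simp : v ∈ (↑(Finset.univ : Finset (Fin n)) : Set (Fin n))) hv
  obtain ⟨S, hScard, hSdom⟩ := Nat.sInf_mem hne
  show (n + 1) / 2 ≤ sInf _
  rw [← hScard]
  exact ocyc_lower hn S hSdom

theorem stmt16 (n : ℕ) (hn : 3 ≤ n) :
    GammaD (SimpleGraph.cycleGraph n) = (n + 1) / 2 := by
  haveI : NeZero n := ⟨by omega⟩
  have hmem : (n + 1) / 2 ∈
      {k | ∃ o, IsOrientation (SimpleGraph.cycleGraph n) o ∧ dirDomNum (Fin n) o = k} :=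
    ⟨ocyc n, ocyc_orient hn, ocyc_dirDomNum hn⟩
  have hub : ∀ k ∈
      {k | ∃ o, IsOrientation (SimpleGraph.cycleGraph n) o ∧ dirDomNum (Fin n) o = k},
      k ≤ (n + 1) / 2 := by
    rintro k ⟨o, ho, rfl⟩
    exact upper_bound hn o ho
  refine le_antisymm ?_ ?_
  · exact csSup_le ⟨_, hmem⟩ hub
  · exact le_csSup ⟨(n + 1) / 2, hub⟩ hmem
end

section
/- If a 2-regular graph G on n ≥ 3 vertices satisfies Γ_d(G) = 2n/3, then every connected component of G is a triangle K_3; conversely, if G is a disjoint union of triangles then Γ_d(G) = 2n/3; and in general Γ_d(G) ≤ 2n/3 for 2-regular G. -/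
open Function Finset

/-- Every connected component of `G` is a triangle. -/
def AllComponentsTriangle {V : Type*} (G : SimpleGraph V) : Prop :=
  ∀ v : V, ∃ a b : V, G.Adj v a ∧ G.Adj v b ∧ G.Adj a b ∧
    {w | G.Reachable v w} = {v, a, b}

section Aux

variable {V : Type*} [Fintype V] [DecidableEq V]

/-- Hall's theorem applied to a 2-regular graph: there is an injective map sending
each vertex to a neighbor. -/
lemma exists_hall_fn (G : SimpleGraph V) [DecidableRel G.Adj]
    (hreg : G.IsRegularOfDegree 2) :
    ∃ f : V → V, Function.Injective f ∧ ∀ v, G.Adj v (f v) := by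
  have hmar : ∀ A : Finset V, A.card ≤ (A.biUnion (fun v => G.neighborFinset v)).card := by
    intro A
    set B := A.biUnion (fun v => G.neighborFinset v) with hB
    have hsub : ∀ a ∈ A, G.neighborFinset a ⊆ B := fun a ha =>
      Finset.subset_biUnion_of_mem (fun v => G.neighborFinset v) ha
    have h1 : ∑ a ∈ A, (G.neighborFinset a).card
        = ∑ a ∈ A, ∑ b ∈ B, (if G.Adj a b then 1 else 0) := by
      refine Finset.sum_congr rfl fun a ha => ?_
      rw [← Finset.card_filter]
      congr 1
      ext b
      simp only [Finset.mem_filter, SimpleGraph.mem_neighborFinset]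
      exact ⟨fun h => ⟨hsub a ha (by simpa [SimpleGraph.mem_neighborFinset] using h), h⟩,
        fun h => h.2⟩
    have h2 : ∑ a ∈ A, ∑ b ∈ B, (if G.Adj a b then 1 else 0)
        = ∑ b ∈ B, ∑ a ∈ A, (if G.Adj a b then 1 else 0) := Finset.sum_comm
    have h3 : ∀ b ∈ B, ∑ a ∈ A, (if G.Adj a b then 1 else 0) ≤ 2 := by
      intro b _
      rw [← Finset.card_filter]
      calc (A.filter (fun a => G.Adj a b)).card ≤ (G.neighborFinset b).card := by
            apply Finset.card_le_card
            intro a ha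
            rw [SimpleGraph.mem_neighborFinset]
            exact (Finset.mem_filter.mp ha).2.symm
        _ = 2 := hreg b
    have h4 : ∑ a ∈ A, (G.neighborFinset a).card = 2 * A.card := by
      have hdeg : ∀ a ∈ A, (G.neighborFinset a).card = 2 := fun a _ => hreg a
      rw [Finset.sum_congr rfl hdeg, Finset.sum_const, smul_eq_mul, Nat.mul_comm]
    have h5 : 2 * A.card ≤ 2 * B.card := by
      rw [← h4, h1, h2]
      calc ∑ b ∈ B, ∑ a ∈ A, (if G.Adj a b then 1 else 0) ≤ ∑ _b ∈ B, 2 :=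
            Finset.sum_le_sum h3
        _ = 2 * B.card := by simp [Nat.mul_comm]
    omega
  obtain ⟨f, hinj, hf⟩ :=
    (Finset.all_card_le_biUnion_card_iff_exists_injective
      (fun v => G.neighborFinset v)).mp hmar
  exact ⟨f, hinj, fun v => by
    have := hf v
    rw [SimpleGraph.mem_neighborFinset] at this
    exact this⟩

variable {G : SimpleGraph V} [DecidableRel G.Adj] {f : V → V}

lemma mem_periodicPts_of_inj (hinj : Function.Injective f) (v : V) :
    v ∈ Function.periodicPts f := by
  obtain ⟨m, n, hmn, h⟩ := Finite.exists_ne_map_eq_of_infinite (fun k : ℕ => f^[k] v)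
  rcases Nat.lt_or_ge m n with hlt | hge
  · have : f^[m] (f^[n - m] v) = f^[m] v := by
      rw [← Function.iterate_add_apply]
      rw [Nat.add_sub_cancel' hlt.le]
      exact h.symm
    have h2 : f^[n - m] v = v := (hinj.iterate m) this
    exact Function.mk_mem_periodicPts (by omega) h2
  · have hlt : n < m := by omega
    have : f^[n] (f^[m - n] v) = f^[n] v := by
      rw [← Function.iterate_add_apply]
      rw [Nat.add_sub_cancel' hlt.le]
      exact h
    have h2 : f^[m - n] v = v := (hinj.iterate n) this
    exact Function.mk_mem_periodicPts (by omega) h2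

/-- The dominating set inside one orbit of `f`. -/
lemma orbit_dom (hinj : Function.Injective f) (hadj : ∀ v, G.Adj v (f v))
    {o : V → V → Prop} (ho : IsOrientation G o) (v₀ : V) :
    ∃ S : Finset V,
      S ⊆ (Finset.range (Function.minimalPeriod f v₀)).image (fun i => f^[i] v₀) ∧
      (∀ w ∈ (Finset.range (Function.minimalPeriod f v₀)).image (fun i => f^[i] v₀),
        w ∉ S → ∃ u ∈ S, o u w) ∧
      3 * S.card ≤ 2 * Function.minimalPeriod f v₀ ∧
      (Function.minimalPeriod f v₀ ≠ 3 → 3 * S.card < 2 * Function.minimalPeriod f v₀) := by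
  classical
  set p := Function.minimalPeriod f v₀ with hp
  have hpmem := mem_periodicPts_of_inj hinj v₀
  have hppos : 0 < p := Function.minimalPeriod_pos_of_mem_periodicPts hpmem
  have hp1 : p ≠ 1 := by
    intro h
    have : f^[p] v₀ = v₀ := Function.iterate_minimalPeriod
    rw [h] at this
    simp only [Function.iterate_one] at this
    exact (G.ne_of_adj (hadj v₀)).symm this
  have hp2 : 2 ≤ p := by omega
  set q := p / 2 with hq
  set r := p % 2 with hr
  have hqr : p = 2 * q + r := (Nat.div_add_mod p 2).symm
  have hr2 : r < 2 := Nat.mod_lt _ (by norm_num)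
  have hq1 : 1 ≤ q := Nat.le_div_iff_mul_le (by norm_num) |>.mpr (by omega)
  set orb := (Finset.range p).image (fun i => f^[i] v₀) with horb
  have hadjpair : ∀ i : ℕ, G.Adj (f^[2*i] v₀) (f^[2*i+1] v₀) := by
    intro i
    have : f^[2*i+1] v₀ = f (f^[2*i] v₀) := Function.iterate_succ_apply' f _ v₀
    rw [this]
    exact hadj _
  have hpair : ∀ i : ℕ, ∃ t : V, (t = f^[2*i] v₀ ∨ t = f^[2*i+1] v₀) ∧
      (∀ w, (w = f^[2*i] v₀ ∨ w = f^[2*i+1] v₀) → w ≠ t → o t w) := by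
    intro i
    by_cases hor : o (f^[2*i] v₀) (f^[2*i+1] v₀)
    · refine ⟨f^[2*i] v₀, Or.inl rfl, ?_⟩
      rintro w (rfl | rfl) hne
      · exact absurd rfl hne
      · exact hor
    · have hor' : o (f^[2*i+1] v₀) (f^[2*i] v₀) :=
        (ho.2.1 _ _ (hadjpair i)).resolve_left hor
      refine ⟨f^[2*i+1] v₀, Or.inr rfl, ?_⟩
      rintro w (rfl | rfl) hne
      · exact hor'
      · exact absurd rfl hne
  set tail : ℕ → V := fun i => (hpair i).choose with htail
  have htail1 : ∀ i, tail i = f^[2*i] v₀ ∨ tail i = f^[2*i+1] v₀ :=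
    fun i => (hpair i).choose_spec.1
  have htail2 : ∀ i, ∀ w, (w = f^[2*i] v₀ ∨ w = f^[2*i+1] v₀) → w ≠ tail i → o (tail i) w :=
    fun i => (hpair i).choose_spec.2
  set extra : Finset V := if r = 1 then {f^[p-1] v₀} else ∅ with hextra
  set S := (Finset.range q).image tail ∪ extra with hS
  have hmemorb : ∀ i, i < p → f^[i] v₀ ∈ orb := by
    intro i hi
    exact Finset.mem_image.mpr ⟨i, Finset.mem_range.mpr hi, rfl⟩
  have htailmem : ∀ i, i < q → tail i ∈ orb := by
    intro i hi
    rcases htail1 i with h | h <;> rw [h]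
    · exact hmemorb _ (by omega)
    · exact hmemorb _ (by omega)
  have hsub : S ⊆ orb := by
    intro x hx
    rcases Finset.mem_union.mp hx with hx | hx
    · obtain ⟨i, hi, rfl⟩ := Finset.mem_image.mp hx
      exact htailmem i (Finset.mem_range.mp hi)
    · rcases eq_or_ne r 1 with h1 | h1
      · rw [hextra, if_pos h1, Finset.mem_singleton] at hx
        subst hx
        exact hmemorb _ (by omega)
      · rw [hextra, if_neg h1] at hx
        simp at hx
  have hdom : ∀ w ∈ orb, w ∉ S → ∃ u ∈ S, o u w := by
    intro w hw hwS
    obtain ⟨j, hj, rfl⟩ := Finset.mem_image.mp hw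
    rw [Finset.mem_range] at hj
    by_cases hlast : r = 1 ∧ j = p - 1
    · exfalso
      apply hwS
      apply Finset.mem_union_right
      rw [hextra, if_pos hlast.1, hlast.2]
      exact Finset.mem_singleton_self _
    have hj2q : j < 2 * q := by omega
    set i := j / 2 with hi
    have hiq : i < q := by omega
    have hcase : j = 2*i ∨ j = 2*i + 1 := by omega
    have htlS : tail i ∈ S :=
      Finset.mem_union_left _ (Finset.mem_image.mpr ⟨i, Finset.mem_range.mpr hiq, rfl⟩)
    have hne : f^[j] v₀ ≠ tail i := by
      intro h
      apply hwS
      rw [h]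
      exact htlS
    have hmem : f^[j] v₀ = f^[2*i] v₀ ∨ f^[j] v₀ = f^[2*i+1] v₀ := by
      rcases hcase with h | h
      · exact Or.inl (by rw [h])
      · exact Or.inr (by rw [h])
    exact ⟨tail i, htlS, htail2 i _ hmem hne⟩
  have hcardextra : extra.card ≤ r := by
    rcases eq_or_ne r 1 with h1 | h1
    · rw [hextra, if_pos h1, Finset.card_singleton]; omega
    · rw [hextra, if_neg h1, Finset.card_empty]; omega
  have hcard : S.card ≤ q + r := by
    calc S.card ≤ ((Finset.range q).image tail).card + extra.card := Finset.card_union_le _ _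
      _ ≤ q + r := by
        apply Nat.add_le_add
        · exact (Finset.card_image_le).trans (by simp)
        · exact hcardextra
  refine ⟨S, hsub, hdom, ?_, ?_⟩
  · omega
  · intro hp3
    have : ¬ (q = 1 ∧ r = 1) := by
      rintro ⟨h1, h2⟩; apply hp3; omega
    omega

/-- the orbit of `v₀` -/
lemma orbit_closed (hinj : Function.Injective f) (v₀ : V) :
    ∀ w ∈ (Finset.range (Function.minimalPeriod f v₀)).image (fun i => f^[i] v₀),
      f w ∈ (Finset.range (Function.minimalPeriod f v₀)).image (fun i => f^[i] v₀) := by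
  intro w hw
  set p := Function.minimalPeriod f v₀ with hp
  have hppos : 0 < p :=
    Function.minimalPeriod_pos_of_mem_periodicPts (mem_periodicPts_of_inj hinj v₀)
  obtain ⟨i, hi, rfl⟩ := Finset.mem_image.mp hw
  rw [Finset.mem_range] at hi
  have hfi : f (f^[i] v₀) = f^[i+1] v₀ := (Function.iterate_succ_apply' f i v₀).symm
  rcases Nat.lt_or_ge (i+1) p with h | h
  · rw [hfi]
    exact Finset.mem_image.mpr ⟨i+1, Finset.mem_range.mpr h, rfl⟩
  · have : i + 1 = p := by omega
    rw [hfi, this, Function.iterate_minimalPeriod]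
    exact Finset.mem_image.mpr ⟨0, Finset.mem_range.mpr hppos, rfl⟩

/-- Main upper bound by induction on f-closed sets. -/
lemma main_upper (hinj : Function.Injective f) (hadj : ∀ v, G.Adj v (f v))
    {o : V → V → Prop} (ho : IsOrientation G o) :
    ∀ T : Finset V, (∀ v ∈ T, f v ∈ T) →
      ∃ S : Finset V, S ⊆ T ∧ (∀ w ∈ T, w ∉ S → ∃ u ∈ S, o u w) ∧
        3 * S.card ≤ 2 * T.card ∧
        ((∃ v ∈ T, Function.minimalPeriod f v ≠ 3) → 3 * S.card < 2 * T.card) := by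
  intro T
  induction T using Finset.strongInduction with
  | _ T IH =>
    intro hT
    rcases T.eq_empty_or_nonempty with rfl | ⟨v₀, hv₀⟩
    · exact ⟨∅, Finset.Subset.refl _, by simp, by simp, by simp⟩
    set p := Function.minimalPeriod f v₀ with hp
    set O := (Finset.range p).image (fun i => f^[i] v₀) with hO
    have hiterT : ∀ i, f^[i] v₀ ∈ T := by
      intro i
      induction i with
      | zero => exact hv₀
      | succ k ih =>
        rw [Function.iterate_succ_apply']
        exact hT _ ih
    have hOT : O ⊆ T := by
      intro x hx
      obtain ⟨i, _, rfl⟩ := Finset.mem_image.mp hx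
      exact hiterT i
    have hpmem := mem_periodicPts_of_inj hinj v₀
    have hppos : 0 < p := Function.minimalPeriod_pos_of_mem_periodicPts hpmem
    have hv₀O : v₀ ∈ O := Finset.mem_image.mpr ⟨0, Finset.mem_range.mpr hppos, rfl⟩
    have hOcard : O.card = p := by
      rw [hO, Finset.card_image_of_injOn, Finset.card_range]
      rw [Finset.coe_range]
      exact Function.iterate_injOn_Iio_minimalPeriod
    have hOclosed := orbit_closed (f := f) hinj v₀
    set T' := T \ O with hT'
    have hT'ss : T' ⊂ T := Finset.sdiff_ssubset hOT ⟨v₀, hv₀O⟩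
    have hT'closed : ∀ v ∈ T', f v ∈ T' := by
      intro v hv
      rw [hT', Finset.mem_sdiff] at hv ⊢
      refine ⟨hT _ hv.1, ?_⟩
      intro hfv
      apply hv.2
      obtain ⟨i, hi, hfi⟩ := Finset.mem_image.mp hfv
      rw [Finset.mem_range] at hi
      rcases Nat.eq_zero_or_pos i with rfl | hipos
      · simp only [Function.iterate_zero, id_eq] at hfi
        have : f (f^[p-1] v₀) = v₀ := by
          have h2 : f^[(p-1)+1] v₀ = f (f^[p-1] v₀) := Function.iterate_succ_apply' f (p-1) v₀
          have h3 : p - 1 + 1 = p := by omega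
          rw [h3] at h2
          rw [← h2]
          exact Function.iterate_minimalPeriod
        have hveq : v = f^[p-1] v₀ := hinj (by rw [this, hfi])
        rw [hveq]
        exact Finset.mem_image.mpr ⟨p-1, Finset.mem_range.mpr (by omega), rfl⟩
      · obtain ⟨k, rfl⟩ := Nat.exists_eq_add_of_lt hipos
        simp only [Nat.zero_add] at *
        have : f^[k+1] v₀ = f (f^[k] v₀) := Function.iterate_succ_apply' f k v₀
        rw [this] at hfi
        have hveq : v = f^[k] v₀ := hinj hfi.symm
        rw [hveq]
        exact Finset.mem_image.mpr ⟨k, Finset.mem_range.mpr (by omega), rfl⟩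
    obtain ⟨S', hS'sub, hS'dom, hS'card, hS'strict⟩ := IH T' hT'ss hT'closed
    obtain ⟨S₀, hS₀sub, hS₀dom, hS₀card, hS₀strict⟩ := orbit_dom hinj hadj ho v₀
    have hTcard : T'.card + O.card = T.card := Finset.card_sdiff_add_card_eq_card hOT
    set S := S' ∪ S₀ with hSdef
    have hScard : S.card ≤ S'.card + S₀.card := Finset.card_union_le _ _
    have hSsub : S ⊆ T :=
      Finset.union_subset (hS'sub.trans (Finset.sdiff_subset)) (hS₀sub.trans hOT)
    have hSdom : ∀ w ∈ T, w ∉ S → ∃ u ∈ S, o u w := by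
      intro w hw hwS
      by_cases hwO : w ∈ O
      · obtain ⟨u, hu, hou⟩ := hS₀dom w hwO (fun h => hwS (Finset.mem_union_right _ h))
        exact ⟨u, Finset.mem_union_right _ hu, hou⟩
      · have hwT' : w ∈ T' := Finset.mem_sdiff.mpr ⟨hw, hwO⟩
        obtain ⟨u, hu, hou⟩ := hS'dom w hwT' (fun h => hwS (Finset.mem_union_left _ h))
        exact ⟨u, Finset.mem_union_left _ hu, hou⟩
    refine ⟨S, hSsub, hSdom, by omega, ?_⟩
    rintro ⟨v, hvT, hv3⟩
    by_cases hvO : v ∈ O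
    · -- the orbit is strict
      obtain ⟨i, _, rfl⟩ := Finset.mem_image.mp hvO
      rw [Function.minimalPeriod_apply_iterate hpmem] at hv3
      have := hS₀strict hv3
      omega
    · have hvT' : v ∈ T' := Finset.mem_sdiff.mpr ⟨hvT, hvO⟩
      have := hS'strict ⟨v, hvT', hv3⟩
      omega

lemma exists_orientation (G : SimpleGraph V) : ∃ o, IsOrientation G o := by
  classical
  let e := Fintype.equivFin V
  refine ⟨fun u v => G.Adj u v ∧ e u < e v, fun u v h => h.1, ?_, ?_⟩
  · intro u v h
    have hne : e u ≠ e v := fun hh => G.ne_of_adj h (e.injective hh)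
    rcases lt_or_gt_of_ne hne with hlt | hgt
    · exact Or.inl ⟨h, hlt⟩
    · exact Or.inr ⟨h.symm, hgt⟩
  · rintro u v ⟨_, h1⟩ ⟨_, h2⟩
    exact absurd h2 (not_lt.mpr h1.le)

lemma dirDomNum_le_card_s17 {o : V → V → Prop} {S : Finset V} (h : IsDirDomSet o ↑S) :
    dirDomNum V o ≤ S.card := Nat.sInf_le ⟨S, rfl, h⟩

lemma univ_dirDom (o : V → V → Prop) : IsDirDomSet o ↑(Finset.univ : Finset V) :=
  fun v hv => absurd (Finset.mem_coe.mpr (Finset.mem_univ v)) hv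

lemma count_lower {f : V → V} (hinj : Function.Injective f)
    (h1 : ∀ v, f v ≠ v) (h3 : ∀ v, f (f (f v)) = v)
    {S : Finset V} (hS : IsDirDomSet (fun u w => f u = w) ↑S) :
    2 * Fintype.card V ≤ 3 * S.card := by
  classical
  set C := (Finset.univ : Finset V) \ S with hC
  have hCS : ∀ w ∈ C, w ∉ S := by
    intro w hw
    rw [hC, Finset.mem_sdiff] at hw
    exact hw.2
  have hfS : ∀ w ∈ C, f w ∈ S := by
    intro w hw
    by_contra hfw
    obtain ⟨u, hu, huw⟩ := hS (f w) (by simpa using hfw)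
    have huweq : u = w := hinj huw
    subst huweq
    exact (hCS _ hw) (by simpa using hu)
  have hffS : ∀ w ∈ C, f (f w) ∈ S := by
    intro w hw
    obtain ⟨u, hu, huw⟩ := hS w (by simpa using hCS _ hw)
    have : f (f w) = u := by rw [← huw]; exact h3 u
    rw [this]
    simpa using hu
  set T := C.biUnion (fun w => ({f w, f (f w)} : Finset V)) with hT
  have hTS : T ⊆ S := by
    intro x hx
    obtain ⟨w, hw, hx⟩ := Finset.mem_biUnion.mp hx
    rcases Finset.mem_insert.mp hx with rfl | hx
    · exact hfS _ hw
    · rw [Finset.mem_singleton] at hx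
      subst hx
      exact hffS _ hw
  have hdisj : ∀ x ∈ C, ∀ y ∈ C, x ≠ y →
      Disjoint ({f x, f (f x)} : Finset V) ({f y, f (f y)} : Finset V) := by
    intro x hx y hy hxy
    rw [Finset.disjoint_left]
    intro z hz hz'
    have hz1 : z = f x ∨ z = f (f x) := by
      rcases Finset.mem_insert.mp hz with h | h
      · exact Or.inl h
      · exact Or.inr (Finset.mem_singleton.mp h)
    have hz2 : z = f y ∨ z = f (f y) := by
      rcases Finset.mem_insert.mp hz' with h | h
      · exact Or.inl h
      · exact Or.inr (Finset.mem_singleton.mp h)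
    rcases hz1 with rfl | h1
    · rcases hz2 with h2 | h2
      · exact hxy (hinj h2)
      · have : x = f y := hinj h2
        exact (hCS _ hx) (this ▸ hfS _ hy)
    · rcases hz2 with h2 | h2
      · have : f y = f (f x) := by rw [← h2, h1]
        have hyfx : y = f x := hinj this
        exact (hCS _ hy) (hyfx ▸ hfS _ hx)
      · have : f (f x) = f (f y) := by rw [← h1, h2]
        exact hxy (hinj (hinj this))
  have hpaircard : ∀ w : V, ({f w, f (f w)} : Finset V).card = 2 := by
    intro w
    rw [Finset.card_insert_of_notMem, Finset.card_singleton]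
    rw [Finset.mem_singleton]
    intro h
    exact h1 w (hinj h).symm
  have hTcard : T.card = 2 * C.card := by
    rw [hT, Finset.card_biUnion hdisj]
    rw [Finset.sum_congr rfl (fun w _ => hpaircard w), Finset.sum_const, smul_eq_mul,
      Nat.mul_comm]
  have hle : T.card ≤ S.card := Finset.card_le_card hTS
  have hCcard : C.card = Fintype.card V - S.card := by
    rw [hC, Finset.card_sdiff_of_subset (Finset.subset_univ S), Finset.card_univ]
  have hSle : S.card ≤ Fintype.card V := Finset.card_le_univ S
  omega

omit [Fintype V] in
lemma act_props {G : SimpleGraph V} {f : V → V} (hinj : Function.Injective f)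
    (hadj : ∀ v, G.Adj v (f v)) (hACT : AllComponentsTriangle G) :
    ∀ v, f (f (f v)) = v ∧ f (f v) ≠ v := by
  have key : ∀ v, f (f v) ≠ v := by
    intro v h
    obtain ⟨a, b, hva, hvb, hab, hR⟩ := hACT v
    have hmem : ∀ w, G.Reachable v w → w = v ∨ w = a ∨ w = b := by
      intro w hw
      have : w ∈ ({v, a, b} : Set V) := hR ▸ hw
      simpa using this
    have hfv : f v = v ∨ f v = a ∨ f v = b := hmem _ (hadj v).reachable
    have hfvne : f v ≠ v := (G.ne_of_adj (hadj v)).symm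
    have hane : a ≠ b := G.ne_of_adj hab
    have haux : ∀ c : V, G.Reachable v c → c ≠ v → c ≠ f v → False := by
      intro c hrc hcv hcfv
      have hfc : f c = v ∨ f c = a ∨ f c = b := hmem _ (hrc.trans (hadj c).reachable)
      have hfcv : f c ≠ v := by
        intro hh
        have : f c = f (f v) := by rw [hh, h]
        exact hcfv (hinj this)
      have hfcfv : f c ≠ f v := fun hh => hcv (hinj hh)
      have hfcc : f c ≠ c := (G.ne_of_adj (hadj c)).symm
      have hc : c = v ∨ c = a ∨ c = b := hmem _ hrc
      rcases hfv with h1 | h1 | h1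
      · exact hfvne h1
      · rcases hfc with h2 | h2 | h2
        · exact hfcv h2
        · exact hfcfv (by rw [h2, h1])
        · rcases hc with h4 | h4 | h4
          · exact hcv h4
          · exact hcfv (by rw [h4, h1])
          · exact hfcc (by rw [h2, h4])
      · rcases hfc with h2 | h2 | h2
        · exact hfcv h2
        · rcases hc with h4 | h4 | h4
          · exact hcv h4
          · exact hfcc (by rw [h2, h4])
          · exact hcfv (by rw [h4, h1])
        · exact hfcfv (by rw [h2, h1])
    rcases hfv with h1 | h1 | h1
    · exact hfvne h1
    · exact haux b hvb.reachable (fun hh => (G.ne_of_adj hvb) hh.symm)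
        (fun hh => hane (by rw [← h1, hh]))
    · exact haux a hva.reachable (fun hh => (G.ne_of_adj hva) hh.symm)
        (fun hh => hane (by rw [← h1, ← hh]))
  intro v
  refine ⟨?_, key v⟩
  obtain ⟨a, b, hva, hvb, hab, hR⟩ := hACT v
  have hmem : ∀ w, G.Reachable v w → w = v ∨ w = a ∨ w = b := by
    intro w hw
    have : w ∈ ({v, a, b} : Set V) := hR ▸ hw
    simpa using this
  have hr1 : G.Reachable v (f v) := (hadj v).reachable
  have hr2 : G.Reachable v (f (f v)) := hr1.trans (hadj (f v)).reachable
  have hr3 : G.Reachable v (f (f (f v))) := hr2.trans (hadj (f (f v))).reachable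
  have hfv := hmem _ hr1
  have hffv := hmem _ hr2
  have hfffv := hmem _ hr3
  have hfvne : f v ≠ v := (G.ne_of_adj (hadj v)).symm
  have hffvne : f (f v) ≠ v := key v
  have hffvnefv : f (f v) ≠ f v := fun hh => hfvne (hinj hh)
  have h31 : f (f (f v)) ≠ f v := fun hh => hffvne (hinj hh)
  have h32 : f (f (f v)) ≠ f (f v) := fun hh => hfvne (hinj (hinj hh))
  rcases hfv with h1 | h1 | h1
  · exact absurd h1 hfvne
  · have h2 : f (f v) = b := by
      rcases hffv with h2 | h2 | h2
      · exact absurd h2 hffvne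
      · exact absurd (by rw [h2, h1]) hffvnefv
      · exact h2
    rcases hfffv with h4 | h4 | h4
    · exact h4
    · exact absurd (by rw [h4, h1]) h31
    · exact absurd (by rw [h4, h2]) h32
  · have h2 : f (f v) = a := by
      rcases hffv with h2 | h2 | h2
      · exact absurd h2 hffvne
      · exact h2
      · exact absurd (by rw [h2, h1]) hffvnefv
    rcases hfffv with h4 | h4 | h4
    · exact h4
    · exact absurd (by rw [h4, h2]) h32
    · exact absurd (by rw [h4, h1]) h31

lemma neighbor_eq {G : SimpleGraph V} [DecidableRel G.Adj] {f : V → V}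
    (hreg : G.IsRegularOfDegree 2) (hinj : Function.Injective f)
    (hadj : ∀ v, G.Adj v (f v)) (h3 : ∀ v, f (f (f v)) = v) (v : V) :
    ∀ w, G.Adj v w → (w = f v ∨ w = f (f v)) := by
  have hfvne : f v ≠ f (f v) := fun h => (G.ne_of_adj (hadj v)).symm (hinj h).symm
  have hvffv : G.Adj v (f (f v)) := by
    have := hadj (f (f v))
    rw [h3 v] at this
    exact this.symm
  have hsub : ({f v, f (f v)} : Finset V) ⊆ G.neighborFinset v := by
    intro x hx
    rcases Finset.mem_insert.mp hx with rfl | hx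
    · rw [SimpleGraph.mem_neighborFinset]; exact hadj v
    · rw [Finset.mem_singleton] at hx
      subst hx
      rw [SimpleGraph.mem_neighborFinset]
      exact hvffv
  have hcard : (G.neighborFinset v).card ≤ ({f v, f (f v)} : Finset V).card := by
    rw [Finset.card_insert_of_notMem (by rw [Finset.mem_singleton]; exact hfvne),
      Finset.card_singleton]
    exact le_of_eq (hreg v)
  have heq : ({f v, f (f v)} : Finset V) = G.neighborFinset v :=
    Finset.eq_of_subset_of_card_le hsub hcard
  intro w hw
  have : w ∈ G.neighborFinset v := by rw [SimpleGraph.mem_neighborFinset]; exact hw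
  rw [← heq] at this
  simpa using this

lemma act_of_triangle {G : SimpleGraph V} [DecidableRel G.Adj] {f : V → V}
    (hreg : G.IsRegularOfDegree 2) (hinj : Function.Injective f)
    (hadj : ∀ v, G.Adj v (f v)) (h3 : ∀ v, f (f (f v)) = v) :
    AllComponentsTriangle G := by
  have hN := neighbor_eq hreg hinj hadj h3
  have hwalk : ∀ (u w : V), G.Walk u w → (w = u ∨ w = f u ∨ w = f (f u)) := by
    intro u w pw
    induction pw with
    | nil => exact Or.inl rfl
    | @cons u x w h q ih =>
      rcases hN u x h with rfl | rfl
      · rcases ih with rfl | rfl | rfl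
        · exact Or.inr (Or.inl rfl)
        · exact Or.inr (Or.inr rfl)
        · exact Or.inl (h3 u)
      · rcases ih with rfl | rfl | rfl
        · exact Or.inr (Or.inr rfl)
        · exact Or.inl (h3 u)
        · exact Or.inr (Or.inl (by rw [h3 u]))
  intro v
  refine ⟨f v, f (f v), hadj v, ?_, hadj (f v), ?_⟩
  · have := hadj (f (f v))
    rw [h3 v] at this
    exact this.symm
  · ext w
    simp only [Set.mem_setOf_eq, Set.mem_insert_iff, Set.mem_singleton_iff]
    constructor
    · intro h
      obtain ⟨pw⟩ := h
      exact hwalk v w pw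
    · rintro (rfl | rfl | rfl)
      · exact SimpleGraph.Reachable.refl w
      · exact (hadj v).reachable
      · exact (hadj v).reachable.trans (hadj (f v)).reachable

end Aux

theorem stmt17 {V : Type*} [Fintype V] (G : SimpleGraph V) [DecidableRel G.Adj]
    (hreg : G.IsRegularOfDegree 2) (hn : 3 ≤ Fintype.card V) :
    3 * GammaD G ≤ 2 * Fintype.card V ∧
      (3 * GammaD G = 2 * Fintype.card V ↔ AllComponentsTriangle G) := by
  classical
  obtain ⟨f, hinj, hadj⟩ := exists_hall_fn G hreg
  have hbdd : BddAbove {m | ∃ o, IsOrientation G o ∧ dirDomNum V o = m} := by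
    refine ⟨Fintype.card V, ?_⟩
    rintro m ⟨o, ho, rfl⟩
    have h := dirDomNum_le_card_s17 (univ_dirDom (V := V) o)
    simpa using h
  have hne : {m | ∃ o, IsOrientation G o ∧ dirDomNum V o = m}.Nonempty := by
    obtain ⟨o, ho⟩ := exists_orientation G
    exact ⟨dirDomNum V o, o, ho, rfl⟩
  obtain ⟨oM, hoM, heqM⟩ :
      ∃ o, IsOrientation G o ∧ dirDomNum V o = GammaD G := Nat.sSup_mem hne hbdd
  have hupper : ∀ {o : V → V → Prop}, IsOrientation G o →
      3 * dirDomNum V o ≤ 2 * Fintype.card V ∧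
      ((∃ v : V, Function.minimalPeriod f v ≠ 3) →
        3 * dirDomNum V o < 2 * Fintype.card V) := by
    intro o ho
    obtain ⟨S, hsub, hdom, hcard, hstrict⟩ :=
      main_upper hinj hadj ho Finset.univ (fun v _ => Finset.mem_univ (f v))
    rw [Finset.card_univ] at hcard hstrict
    have hdd : IsDirDomSet o ↑S := by
      intro v hv
      obtain ⟨u, hu, huv⟩ := hdom v (Finset.mem_univ v) (fun h => hv (Finset.mem_coe.mpr h))
      exact ⟨u, Finset.mem_coe.mpr hu, huv⟩
    have hle := dirDomNum_le_card_s17 hdd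
    refine ⟨by omega, ?_⟩
    rintro ⟨v, hv⟩
    have := hstrict ⟨v, Finset.mem_univ v, hv⟩
    omega
  have part1 : 3 * GammaD G ≤ 2 * Fintype.card V := by
    have := (hupper hoM).1
    omega
  refine ⟨part1, ?_, ?_⟩
  · intro h
    have hall3 : ∀ v : V, Function.minimalPeriod f v = 3 := by
      by_contra hc
      push_neg at hc
      have := (hupper hoM).2 hc
      omega
    have h3 : ∀ v, f (f (f v)) = v := by
      intro v
      have h := Function.iterate_minimalPeriod (f := f) (x := v)
      rw [hall3 v] at h
      exact h
    exact act_of_triangle hreg hinj hadj h3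
  · intro hACT
    have hprops := act_props hinj hadj hACT
    have h3 : ∀ v, f (f (f v)) = v := fun v => (hprops v).1
    have h2 : ∀ v, f (f v) ≠ v := fun v => (hprops v).2
    have h1 : ∀ v, f v ≠ v := fun v => (G.ne_of_adj (hadj v)).symm
    set o₁ : V → V → Prop := fun u w => f u = w with ho₁def
    have ho₁ : IsOrientation G o₁ := by
      refine ⟨?_, ?_, ?_⟩
      · intro u w hw
        rw [ho₁def] at hw
        rw [← hw]
        exact hadj u
      · intro u w hw
        rcases neighbor_eq hreg hinj hadj h3 u w hw with rfl | rfl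
        · exact Or.inl rfl
        · exact Or.inr (h3 u)
      · intro u w huw hwu
        rw [ho₁def] at huw hwu
        exact h2 u (by rw [huw, hwu])
    obtain ⟨S, hScard, hSdom⟩ :
        ∃ S : Finset V, S.card = dirDomNum V o₁ ∧ IsDirDomSet o₁ ↑S := by
      have hmm := Nat.sInf_mem (s := {k | ∃ S : Finset V, S.card = k ∧ IsDirDomSet o₁ ↑S})
        ⟨Fintype.card V, Finset.univ, Finset.card_univ, univ_dirDom o₁⟩
      obtain ⟨S, h1', h2'⟩ := hmm
      exact ⟨S, h1', h2'⟩
    have hcount : 2 * Fintype.card V ≤ 3 * S.card := count_lower hinj h1 h3 hSdom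
    have hΓ : dirDomNum V o₁ ≤ GammaD G := le_csSup hbdd ⟨o₁, ho₁, rfl⟩
    omega
end

section
/- If a graph G admits an orientation D in which every vertex has in-degree at most k, then the chromatic number of G is at most 2k+1. -/
lemma aux18 (k : ℕ) : ∀ (n : ℕ) (V : Type*) [Fintype V] (G : SimpleGraph V)
    (o : V → V → Prop), Fintype.card V ≤ n → IsOrientation G o →
    (∀ v : V, ({u | o u v} : Set V).ncard ≤ k) → G.Colorable (2 * k + 1) := by
  intro n
  induction n with
  | zero =>
    intro V _ G o hcard _ _
    have : IsEmpty V := Fintype.card_eq_zero_iff.mp (Nat.le_zero.mp hcard)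
    exact ⟨SimpleGraph.Coloring.mk isEmptyElim (fun {v} => isEmptyElim v)⟩
  | succ n ih =>
    intro V _ G o hcard ho hk
    classical
    by_cases hE : IsEmpty V
    · exact ⟨SimpleGraph.Coloring.mk isEmptyElim (fun {v} => isEmptyElim v)⟩
    have hNE : Nonempty V := not_isEmpty_iff.mp hE
    obtain ⟨ho1, ho2, ho3⟩ := ho
    -- in-degree finsets
    set ind : V → Finset V := fun v => Finset.univ.filter (fun u => o u v) with hind
    set outd : V → Finset V := fun v => Finset.univ.filter (fun u => o v u) with houtd
    set deg : V → Finset V := fun v => Finset.univ.filter (fun u => G.Adj u v) with hdeg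
    have hkind : ∀ v, (ind v).card ≤ k := by
      intro v
      have : ({u | o u v} : Set V) = ↑(ind v) := by ext u; simp [hind]
      have h2 := hk v
      rwa [this, Set.ncard_coe_finset] at h2
    have hdegsplit : ∀ v, (deg v).card = (ind v).card + (outd v).card := by
      intro v
      have hunion : deg v = ind v ∪ outd v := by
        ext u
        simp only [hdeg, hind, houtd, Finset.mem_filter, Finset.mem_union, Finset.mem_univ,
          true_and]
        constructor
        · intro h; exact ho2 u v h
        · rintro (h | h)
          · exact ho1 u v h
          · exact (ho1 v u h).symm
      rw [hunion, Finset.card_union_of_disjoint]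
      rw [Finset.disjoint_left]
      intro u hu hu'
      simp only [hind, houtd, Finset.mem_filter] at hu hu'
      exact ho3 u v hu.2 hu'.2
    -- double counting
    have hswap : ∑ v : V, (outd v).card = ∑ v : V, (ind v).card := by
      simp only [houtd, hind, Finset.card_filter]
      exact Finset.sum_comm
    have hsum : ∑ v : V, (deg v).card ≤ ∑ v : V, 2 * k := by
      calc ∑ v : V, (deg v).card = ∑ v : V, ((ind v).card + (outd v).card) := by
            exact Finset.sum_congr rfl fun v _ => hdegsplit v
        _ = (∑ v : V, (ind v).card) + ∑ v : V, (outd v).card := Finset.sum_add_distrib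
        _ = (∑ v : V, (ind v).card) + ∑ v : V, (ind v).card := by rw [hswap]
        _ ≤ (∑ v : V, k) + ∑ v : V, k :=
            Nat.add_le_add (Finset.sum_le_sum fun x _ => hkind x)
              (Finset.sum_le_sum fun x _ => hkind x)
        _ = ∑ v : V, 2 * k := by
            simp [Finset.sum_const, two_mul]
            ring
    obtain ⟨v, -, hv⟩ := Finset.exists_le_of_sum_le Finset.univ_nonempty hsum
    -- restrict to V' = {u // u ≠ v}
    let V' := {u : V // u ≠ v}
    let G' : SimpleGraph V' := G.comap Subtype.val
    let o' : V' → V' → Prop := fun a b => o a.1 b.1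
    have hcard' : Fintype.card V' ≤ n := by
      have h2 : Fintype.card V' < Fintype.card V :=
        Fintype.card_subtype_lt (p := fun u => u ≠ v) (x := v) (by simp)
      omega
    have ho' : IsOrientation G' o' := by
      refine ⟨fun a b h => ho1 a.1 b.1 h, fun a b h => ho2 a.1 b.1 h,
        fun a b h => ho3 a.1 b.1 h⟩
    have hk' : ∀ b : V', ({a | o' a b} : Set V').ncard ≤ k := by
      intro b
      have hinj : Set.InjOn Subtype.val ({a | o' a b} : Set V') := fun x _ y _ h =>
        Subtype.ext h
      have himg : Subtype.val '' ({a | o' a b} : Set V') ⊆ {u | o u b.1} := by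
        rintro u ⟨a, ha, rfl⟩; exact ha
      calc ({a | o' a b} : Set V').ncard
          = (Subtype.val '' ({a | o' a b} : Set V')).ncard := (Set.ncard_image_of_injOn hinj).symm
        _ ≤ ({u | o u b.1} : Set V).ncard :=
            Set.ncard_le_ncard himg (Set.toFinite _)
        _ ≤ k := hk b.1
    obtain ⟨C⟩ := ih V' G' o' hcard' ho' hk'
    -- find a color free for v
    let N : Finset V := Finset.univ.filter (fun u => G.Adj v u)
    have hN : N.card ≤ 2 * k := by
      have : N = deg v := by
        ext u; simp [N, hdeg, SimpleGraph.adj_comm]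
      rw [this]; exact hv
    let used : Finset (Fin (2 * k + 1)) :=
      N.attach.image (fun u => C ⟨u.1, (G.ne_of_adj (Finset.mem_filter.mp u.2).2).symm⟩)
    have hused : used.card < 2 * k + 1 := by
      calc used.card ≤ N.attach.card := Finset.card_image_le
        _ = N.card := Finset.card_attach
        _ ≤ 2 * k := hN
        _ < 2 * k + 1 := Nat.lt_succ_self _
    have : ∃ c : Fin (2 * k + 1), c ∉ used := by
      by_contra h
      push_neg at h
      have : (Finset.univ : Finset (Fin (2 * k + 1))) ⊆ used := fun c _ => h c
      have := Finset.card_le_card this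
      simp at this
      omega
    obtain ⟨c, hc⟩ := this
    refine ⟨SimpleGraph.Coloring.mk
      (fun u => if h : u = v then c else C ⟨u, h⟩) ?_⟩
    intro u w hadj
    by_cases hu : u = v
    · subst hu
      have hw : w ≠ u := (G.ne_of_adj hadj).symm
      rw [dif_pos rfl, dif_neg hw]
      intro heq
      apply hc
      rw [heq]
      have hwN : w ∈ N := by simp [N, hadj]
      exact Finset.mem_image.mpr ⟨⟨w, hwN⟩, Finset.mem_attach _ _, rfl⟩
    · by_cases hw : w = v
      · subst hw
        rw [dif_neg hu, dif_pos rfl]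
        intro heq
        apply hc
        rw [← heq]
        have huN : u ∈ N := by simp [N, hadj.symm]
        exact Finset.mem_image.mpr ⟨⟨u, huN⟩, Finset.mem_attach _ _, rfl⟩
      · rw [dif_neg hu, dif_neg hw]
        intro heq
        exact C.valid (show G'.Adj ⟨u, hu⟩ ⟨w, hw⟩ from hadj) heq

theorem stmt18 {V : Type*} [Fintype V] (G : SimpleGraph V) (o : V → V → Prop)
    (ho : IsOrientation G o) (k : ℕ)
    (hk : ∀ v : V, ({u | o u v} : Set V).ncard ≤ k) :
    G.Colorable (2 * k + 1) := by
  exact aux18 k (Fintype.card V) V G o le_rfl ho hk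
end

section
/- Let D be an orientation of a graph G, k ≥ 0 a fixed integer, and let n_k be the number of vertices of G whose in-degree in D is at most k. Then n_k ≤ (2k+1)·α(G), where α(G) is the independence number of G. -/
open Classical in
lemma key_indep {V : Type*} [Fintype V] (G : SimpleGraph V) (o : V → V → Prop)
    (ho : IsOrientation G o) (k : ℕ) :
    ∀ S : Finset V, (∀ v ∈ S, (S.filter (fun u => o u v)).card ≤ k) →
      ∃ I : Finset V, I ⊆ S ∧ (∀ u ∈ I, ∀ w ∈ I, u ≠ w → ¬ G.Adj u w) ∧
        S.card ≤ (2 * k + 1) * I.card := by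
  intro S
  induction S using Finset.strongInduction with
  | _ S ih =>
    intro h
    rcases S.eq_empty_or_nonempty with rfl | hne
    · exact ⟨∅, by simp⟩
    -- degree within S
    have hsplit : ∀ v : V, S.filter (fun u => G.Adj u v)
        = S.filter (fun u => o u v) ∪ S.filter (fun u => o v u) := by
      intro v
      rw [Finset.filter_union_right]
      apply Finset.filter_congr
      intro u _
      constructor
      · intro hadj; exact ho.2.1 u v hadj
      · rintro (h1 | h2)
        · exact ho.1 u v h1
        · exact (ho.1 v u h2).symm
    have hdisj : ∀ v : V, Disjoint (S.filter (fun u => o u v)) (S.filter (fun u => o v u)) := by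
      intro v
      rw [Finset.disjoint_left]
      intro u hu hu'
      exact ho.2.2 u v (Finset.mem_filter.1 hu).2 (Finset.mem_filter.1 hu').2
    have hswap : ∑ v ∈ S, (S.filter (fun u => o v u)).card
        = ∑ v ∈ S, (S.filter (fun u => o u v)).card := by
      simp_rw [Finset.card_filter]
      exact Finset.sum_comm
    have hsum : ∑ v ∈ S, (S.filter (fun u => G.Adj u v)).card ≤ ∑ _v ∈ S, 2 * k := by
      calc ∑ v ∈ S, (S.filter (fun u => G.Adj u v)).card
          = ∑ v ∈ S, ((S.filter (fun u => o u v)).card + (S.filter (fun u => o v u)).card) := by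
            refine Finset.sum_congr rfl fun v _ => ?_
            rw [hsplit v, Finset.card_union_of_disjoint (hdisj v)]
        _ = ∑ v ∈ S, (S.filter (fun u => o u v)).card
              + ∑ v ∈ S, (S.filter (fun u => o v u)).card := Finset.sum_add_distrib
        _ = 2 * ∑ v ∈ S, (S.filter (fun u => o u v)).card := by rw [hswap]; ring
        _ ≤ 2 * ∑ _v ∈ S, k := by
            exact Nat.mul_le_mul_left 2 (Finset.sum_le_sum h)
        _ = ∑ _v ∈ S, 2 * k := by rw [Finset.mul_sum]
    obtain ⟨v, hvS, hvdeg⟩ := Finset.exists_le_of_sum_le hne hsum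
    set T : Finset V := S.filter (fun u => u ≠ v ∧ ¬ G.Adj u v) with hT
    have hTS : T ⊆ S := Finset.filter_subset _ _
    have hvT : v ∉ T := by simp [hT]
    have hTss : T ⊂ S := Finset.ssubset_iff_of_subset hTS |>.2 ⟨v, hvS, hvT⟩
    have hTh : ∀ w ∈ T, (T.filter (fun u => o u w)).card ≤ k := by
      intro w hw
      exact le_trans (Finset.card_le_card
        (Finset.filter_subset_filter _ hTS)) (h w (hTS hw))
    obtain ⟨I', hI'T, hI'ind, hI'card⟩ := ih T hTss hTh
    have hvI' : v ∉ I' := fun hv => hvT (hI'T hv)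
    refine ⟨insert v I', ?_, ?_, ?_⟩
    · exact Finset.insert_subset hvS (hI'T.trans hTS)
    · intro u hu w hw hne'
      rcases Finset.mem_insert.1 hu with hu0 | hu1 <;>
        rcases Finset.mem_insert.1 hw with hw0 | hw1
      · exact absurd (hu0.trans hw0.symm) hne'
      · have h2 := (Finset.mem_filter.1 (hI'T hw1)).2.2
        subst hu0
        exact fun hadj => h2 hadj.symm
      · have h2 := (Finset.mem_filter.1 (hI'T hu1)).2.2
        subst hw0
        exact h2
      · exact hI'ind u hu1 w hw1 hne'
    · have hsdiff : S \ T ⊆ insert v (S.filter (fun u => G.Adj u v)) := by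
        intro u hu
        rcases Finset.mem_sdiff.1 hu with ⟨huS, huT⟩
        simp only [hT, Finset.mem_filter, not_and, not_not] at huT
        rcases Classical.em (u = v) with rfl | hne'
        · exact Finset.mem_insert_self _ _
        · exact Finset.mem_insert_of_mem (Finset.mem_filter.2 ⟨huS, huT huS hne'⟩)
      have hcard1 : (S \ T).card ≤ 2 * k + 1 := by
        calc (S \ T).card ≤ (insert v (S.filter (fun u => G.Adj u v))).card :=
              Finset.card_le_card hsdiff
          _ ≤ (S.filter (fun u => G.Adj u v)).card + 1 := Finset.card_insert_le _ _
          _ ≤ 2 * k + 1 := by omega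
      have hScard : S.card = T.card + (S \ T).card := by
        rw [Nat.add_comm]
        exact (Finset.card_sdiff_add_card_eq_card hTS).symm
      rw [Finset.card_insert_of_notMem hvI']
      calc S.card = T.card + (S \ T).card := hScard
        _ ≤ (2 * k + 1) * I'.card + (2 * k + 1) := Nat.add_le_add hI'card hcard1
        _ = (2 * k + 1) * (I'.card + 1) := by ring

theorem stmt19 {V : Type*} [Fintype V] (G : SimpleGraph V) (o : V → V → Prop)
    (ho : IsOrientation G o) (k : ℕ) :
    ({v : V | ({u | o u v} : Set V).ncard ≤ k} : Set V).ncard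
      ≤ (2 * k + 1) * indepNum G := by
  classical
  set A : Set V := {v : V | ({u | o u v} : Set V).ncard ≤ k} with hA
  have hAnc : A.ncard = A.toFinset.card := Set.ncard_eq_toFinset_card' A
  have hS : ∀ v ∈ A.toFinset, (A.toFinset.filter (fun u => o u v)).card ≤ k := by
    intro v hv
    have hsub : A.toFinset.filter (fun u => o u v) ⊆ ({u | o u v} : Set V).toFinset := by
      intro u hu
      simp only [Set.mem_toFinset, Set.mem_setOf_eq]
      exact (Finset.mem_filter.1 hu).2
    calc (A.toFinset.filter (fun u => o u v)).card
        ≤ ({u | o u v} : Set V).toFinset.card := Finset.card_le_card hsub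
      _ = ({u | o u v} : Set V).ncard := (Set.ncard_eq_toFinset_card' _).symm
      _ ≤ k := by simpa [hA] using Set.mem_toFinset.1 hv
  obtain ⟨I, _, hIind, hIcard⟩ := key_indep G o ho k A.toFinset hS
  have hle : I.card ≤ indepNum G := by
    apply le_csSup
    · refine ⟨Fintype.card V, ?_⟩
      rintro n ⟨S, rfl, -⟩
      exact S.card_le_univ
    · exact ⟨I, rfl, hIind⟩
  calc A.ncard = A.toFinset.card := hAnc
    _ ≤ (2 * k + 1) * I.card := hIcard
    _ ≤ (2 * k + 1) * indepNum G := Nat.mul_le_mul_left _ hle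
end
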